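/- arXiv:2510.14124 — 8 statements merged into one kernel-verified Lean document; each statement's English description precedes it below -/
import Mathlib

section
/- For all nonnegative integers n, m, N, the coefficient of q^n in the Gaussian binomial coefficient [N+m choose m]_q equals the number of partitions of n into at most m parts each of size at most N. -/
/-!
Both sides obey the `q`-Pascal recurrence
`[m+N+2 choose m+1] = [m+N+1 choose m+1] + q^(N+1) [m+N+1 choose m]`
with the same boundary values. For partitions in an `(m+1) × (N+1)` box this is the split
according to whether some part equals `N + 1`; removing one such part leaves a partition of
`n - (N+1)` in an `m × (N+1)` box. The product identity determines `G` because
`∏ (1 - q^j)` is not a zero divisor in `ℤ[q]`.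
-/

/-- `pBdd n m N` is the number of partitions of `n` into at most `m` parts,
each part at most `N`; it is `0` for negative `n`. -/
noncomputable def pBdd (n : ℤ) (m N : ℕ) : ℕ :=
  if 0 ≤ n then
    Nat.card {π : Nat.Partition n.toNat //
      Multiset.card π.parts ≤ m ∧ ∀ i ∈ π.parts, i ≤ N}
  else 0

/-- `pAtMost n m` is the number of partitions of `n` into at most `m` parts;
it is `0` for negative `n`. -/
noncomputable def pAtMost (n : ℤ) (m : ℕ) : ℕ :=
  if 0 ≤ n then
    Nat.card {π : Nat.Partition n.toNat // Multiset.card π.parts ≤ m}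
  else 0

open Polynomial Finset

namespace Nat.Partition

def FitsInBox (m N : ℕ) {n : ℕ} (π : n.Partition) : Prop :=
  Multiset.card π.parts ≤ m ∧ ∀ i ∈ π.parts, i ≤ N

variable {n m N k : ℕ} {π : n.Partition}

theorem fitsInBox_zero_left : π.FitsInBox 0 N ↔ π.parts = 0 := by
  simp +contextual [FitsInBox]

theorem fitsInBox_zero_right : π.FitsInBox m 0 ↔ π.parts = 0 := by
  refine ⟨fun h => Multiset.eq_zero_of_forall_notMem fun i hi => ?_, fun h => by simp [FitsInBox, h]⟩
  have := π.parts_pos hi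
  have := h.2 i hi
  omega

theorem fitsInBox_succ_and_notMem :
    π.FitsInBox m (N + 1) ∧ N + 1 ∉ π.parts ↔ π.FitsInBox m N := by
  refine ⟨fun ⟨⟨hm, hN⟩, hmem⟩ => ⟨hm, fun i hi => ?_⟩,
    fun ⟨hm, hN⟩ => ⟨⟨hm, fun i hi => (hN i hi).trans N.le_succ⟩, fun hi => ?_⟩⟩
  · have := hN i hi
    have : i ≠ N + 1 := by rintro rfl; exact hmem hi
    omega
  · have := hN _ hi
    omega

def erasePartEquiv (hk : 0 < k) (hkn : k ≤ n) :
    {π : n.Partition // k ∈ π.parts} ≃ (n - k).Partition where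
  toFun π :=
    { parts := π.1.parts.erase k
      parts_pos := fun hi => π.1.parts_pos (Multiset.mem_of_mem_erase hi)
      parts_sum := by
        have := congrArg Multiset.sum (Multiset.cons_erase π.2)
        rw [Multiset.sum_cons, π.1.parts_sum] at this
        omega }
  invFun ρ :=
    ⟨{ parts := k ::ₘ ρ.parts
       parts_pos := fun hi => (Multiset.mem_cons.1 hi).elim (· ▸ hk) ρ.parts_pos
       parts_sum := by rw [Multiset.sum_cons, ρ.parts_sum]; omega },
      Multiset.mem_cons_self _ _⟩
  left_inv π := Subtype.ext (Nat.Partition.ext (Multiset.cons_erase π.2))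
  right_inv ρ := Nat.Partition.ext (Multiset.erase_cons_head _ _)

theorem fitsInBox_erasePartEquiv_symm (hk : 0 < k) (hkn : k ≤ n) (hkN : k ≤ N)
    (ρ : (n - k).Partition) :
    ((erasePartEquiv hk hkn).symm ρ).1.FitsInBox (m + 1) N ↔ ρ.FitsInBox m N := by
  simp [FitsInBox, erasePartEquiv, hkN]

end Nat.Partition

open Nat.Partition

noncomputable def boxCount (n m N : ℕ) : ℕ :=
  Nat.card {π : n.Partition // π.FitsInBox m N}

theorem pBdd_natCast (n m N : ℕ) : pBdd n m N = boxCount n m N := by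
  simp only [pBdd, Nat.cast_nonneg, if_true, Int.toNat_natCast]
  rfl

theorem card_partition_parts_eq_zero (n : ℕ) :
    Nat.card {π : n.Partition // π.parts = 0} = if n = 0 then 1 else 0 := by
  split_ifs with hn
  · subst hn
    simp
  · have : IsEmpty {π : n.Partition // π.parts = 0} :=
      ⟨fun ⟨π, h⟩ => hn (by rw [← π.parts_sum, h, Multiset.sum_zero])⟩
    exact Nat.card_of_isEmpty

theorem boxCount_zero_left (n N : ℕ) : boxCount n 0 N = if n = 0 then 1 else 0 := by
  simp_rw [boxCount, fitsInBox_zero_left]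
  exact card_partition_parts_eq_zero n

theorem boxCount_zero_right (n m : ℕ) : boxCount n m 0 = if n = 0 then 1 else 0 := by
  simp_rw [boxCount, fitsInBox_zero_right]
  exact card_partition_parts_eq_zero n

theorem Nat.card_subtype_eq_card_and_add_card_and_not {α : Type*} [Finite α] (p q : α → Prop) :
    Nat.card {x // p x} = Nat.card {x // p x ∧ q x} + Nat.card {x // p x ∧ ¬q x} := by
  classical
  rw [← Nat.card_sum]
  exact Nat.card_congr <| (Equiv.sumCompl fun y : {x // p x} => q y.1).symm.trans
    (Equiv.sumCongr (Equiv.subtypeSubtypeEquivSubtypeInter p q)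
      (Equiv.subtypeSubtypeEquivSubtypeInter p fun x => ¬q x))

theorem card_fitsInBox_and_mem_parts {n m N k : ℕ} (hk : 0 < k) (hkn : k ≤ n) (hkN : k ≤ N) :
    Nat.card {π : n.Partition // π.FitsInBox (m + 1) N ∧ k ∈ π.parts} = boxCount (n - k) m N :=
  Nat.card_congr <| (Equiv.subtypeEquivRight fun _ => and_comm).trans <|
    (Equiv.subtypeSubtypeEquivSubtypeInter _ _).symm.trans <|
      ((erasePartEquiv hk hkn).symm.subtypeEquiv fun ρ =>
        (fitsInBox_erasePartEquiv_symm hk hkn hkN ρ).symm).symm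

theorem boxCount_succ_succ (n m N : ℕ) :
    boxCount n (m + 1) (N + 1) =
      boxCount n (m + 1) N + if N + 1 ≤ n then boxCount (n - (N + 1)) m (N + 1) else 0 := by
  rw [boxCount, Nat.card_subtype_eq_card_and_add_card_and_not _ fun π => N + 1 ∈ π.parts,
    add_comm]
  congr 1
  · simp_rw [fitsInBox_succ_and_notMem]
    rfl
  · split_ifs with hn
    · exact card_fitsInBox_and_mem_parts N.succ_pos hn le_rfl
    · have : IsEmpty {π : n.Partition // π.FitsInBox (m + 1) (N + 1) ∧ N + 1 ∈ π.parts} :=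
        ⟨fun ⟨π, _, h⟩ => hn (le_of_mem_parts h)⟩
      exact Nat.card_of_isEmpty

/-- The Gaussian binomial `[m+N choose m]`, through the `q`-Pascal recurrence. -/
noncomputable def gaussianBinomial : ℕ → ℕ → ℤ[X]
  | 0, _ => 1
  | _ + 1, 0 => 1
  | m + 1, N + 1 => gaussianBinomial (m + 1) N + gaussianBinomial m (N + 1) * X ^ (N + 1)
  termination_by m N => m + N

theorem Finset.prod_Icc_one_succ {M : Type*} [CommMonoid M] (f : ℕ → M) (m : ℕ) :
    ∏ j ∈ Icc 1 (m + 1), f j = f 1 * ∏ j ∈ Icc 1 m, f (j + 1) := by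
  induction m with
  | zero => simp
  | succ m ih => rw [prod_Icc_succ_top (by omega), ih, prod_Icc_succ_top (by omega), mul_assoc]

theorem gaussianBinomial_mul_prod : ∀ m N : ℕ,
    gaussianBinomial m N * ∏ j ∈ Icc 1 m, (1 - X ^ j) = ∏ j ∈ Icc 1 m, (1 - X ^ (N + j) : ℤ[X])
  | 0, N => by simp [gaussianBinomial]
  | m + 1, 0 => by simp [gaussianBinomial]
  | m + 1, N + 1 => by
    have hN := gaussianBinomial_mul_prod (m + 1) N
    have hm := gaussianBinomial_mul_prod m (N + 1)
    have hA : ∏ j ∈ Icc 1 (m + 1), (1 - X ^ (N + j) : ℤ[X]) =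
        (1 - X ^ (N + 1)) * ∏ j ∈ Icc 1 m, (1 - X ^ (N + 1 + j)) := by
      simp only [Finset.prod_Icc_one_succ, add_assoc, add_comm 1]
    rw [gaussianBinomial, prod_Icc_succ_top (by omega), prod_Icc_succ_top (by omega)]
    rw [prod_Icc_succ_top (by omega), hA] at hN
    linear_combination hN + X ^ (N + 1) * (1 - X ^ (m + 1)) * hm
  termination_by m N => m + N

theorem coeff_gaussianBinomial : ∀ m N n : ℕ, (gaussianBinomial m N).coeff n = boxCount n m N
  | 0, N, n => by
    rw [gaussianBinomial, coeff_one, boxCount_zero_left]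
    split_ifs <;> simp_all
  | m + 1, 0, n => by
    rw [gaussianBinomial, coeff_one, boxCount_zero_right]
    split_ifs <;> simp_all
  | m + 1, N + 1, n => by
    rw [gaussianBinomial, coeff_add, coeff_mul_X_pow', boxCount_succ_succ,
      coeff_gaussianBinomial (m + 1) N n, coeff_gaussianBinomial m (N + 1) (n - (N + 1)),
      Nat.cast_add, Nat.cast_ite, Nat.cast_zero]
  termination_by m N => m + N

theorem prod_one_sub_X_pow_ne_zero {R : Type*} [CommRing R] [Nontrivial R] (m : ℕ) :
    ∏ j ∈ Icc 1 m, (1 - X ^ j : R[X]) ≠ 0 := by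
  intro h
  have h0 := congrArg (eval 0) h
  rw [eval_prod, prod_eq_one fun j hj => by simp [Nat.one_le_iff_ne_zero.1 (mem_Icc.1 hj).1],
    eval_zero] at h0
  exact one_ne_zero h0

/-- The coefficient of `q^n` in the Gaussian binomial coefficient
`[N+m choose m]_q` (characterized as the polynomial `G` with
`G * ∏_{j=1}^m (1-q^j) = ∏_{j=1}^m (1-q^{N+j})`) equals the number of
partitions of `n` into at most `m` parts each of size at most `N`. -/
theorem stmt0 (m N : ℕ) (G : Polynomial ℤ)
    (hG : G * ∏ j ∈ Finset.Icc 1 m, (1 - Polynomial.X ^ j) =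
          ∏ j ∈ Finset.Icc 1 m, (1 - Polynomial.X ^ (N + j))) :
    ∀ n : ℕ, G.coeff n = (pBdd n m N : ℤ) := by
  have hG' : G = gaussianBinomial m N :=
    mul_right_cancel₀ (prod_one_sub_X_pow_ne_zero m) (hG.trans (gaussianBinomial_mul_prod m N).symm)
  intro n
  rw [hG', coeff_gaussianBinomial, pBdd_natCast]
end

section
/- For every nonnegative integer A, the generating function identity ∑_{N≥0} p(N - A, 2, N) z^N = z^A / ((1-z)(1-z^2)) holds as an identity of formal power series. -/
open PowerSeries

/-- The bijection witness: `g n k` is the partition `{n - k, k}` (zeros removed). -/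
noncomputable def gPart (n : ℕ) (k : Fin (n / 2 + 1)) :
    {π : Nat.Partition n // Multiset.card π.parts ≤ 2} := by
  refine ⟨Nat.Partition.ofSums n {n - k.1, k.1} ?_, ?_⟩
  · have := k.2; simp; omega
  · simpa using Multiset.card_le_card (Multiset.filter_le (· ≠ 0) ({n - k.1, k.1}))

lemma gPart_parts (n : ℕ) (k : Fin (n / 2 + 1)) :
    (gPart n k).1.parts = Multiset.filter (· ≠ 0) {n - k.1, k.1} := rfl

lemma sup_le_sum (s : Multiset ℕ) : s.sup ≤ s.sum := by
  refine Multiset.sup_le.2 fun a ha => Multiset.le_sum_of_mem ha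

lemma gPart_bijective (n : ℕ) : Function.Bijective (gPart n) := by
  constructor
  · -- injective via left inverse k ↦ n - sup of parts
    intro k₁ k₂ h
    have key : ∀ k : Fin (n / 2 + 1), n - (gPart n k).1.parts.sup = k.1 := by
      intro k
      have hk := k.2
      rw [gPart_parts]
      rcases Nat.eq_zero_or_pos k.1 with h0 | h0
      · rcases Nat.eq_zero_or_pos n with hn | hn
        · simp [h0, hn]
        · rw [h0]
          have : Multiset.filter (· ≠ 0) ({n - 0, 0} : Multiset ℕ) = {n} := by
            rw [show ({n - 0, 0} : Multiset ℕ) = (n - 0) ::ₘ {0} from rfl,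
              Multiset.filter_cons_of_pos _ (by simpa using hn.ne'),
              Multiset.filter_singleton, if_neg (by simp)]
            simp
          simp [this]
      · have h1 : n - k.1 ≠ 0 := by omega
        have h2 : (k.1 : ℕ) ≠ 0 := by omega
        have : Multiset.filter (· ≠ 0) {n - k.1, k.1} = {n - k.1, k.1} := by
          rw [Multiset.filter_eq_self]
          intro a ha
          simp at ha
          rcases ha with rfl | rfl <;> assumption
        rw [this]
        have : ({n - k.1, k.1} : Multiset ℕ).sup = (n - k.1) ⊔ k.1 := by
          simp [Multiset.sup_cons]
        rw [this]
        have : (n - k.1) ⊔ k.1 = n - k.1 := by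
          rw [sup_eq_left]; omega
        omega
    have := (key k₁).symm.trans (congrArg (fun x => n - x.1.parts.sup) h)
    rw [key k₂] at this
    exact Fin.ext this
  · -- surjective
    rintro ⟨π, hπ⟩
    have hsum := π.parts_sum
    have hcases : Multiset.card π.parts = 0 ∨ Multiset.card π.parts = 1 ∨
        Multiset.card π.parts = 2 := by omega
    rcases hcases with h | h | h
    · rw [Multiset.card_eq_zero] at h
      have hn : n = 0 := by rw [h] at hsum; simpa using hsum.symm
      refine ⟨⟨0, by omega⟩, ?_⟩
      apply Subtype.ext; apply Nat.Partition.ext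
      rw [gPart_parts, h]
      subst hn
      rw [show ({0 - 0, 0} : Multiset ℕ) = (0 : ℕ) ::ₘ {0} from rfl,
        Multiset.filter_cons_of_neg _ (by simp), Multiset.filter_singleton,
        if_neg (by simp)]
      rfl
    · rw [Multiset.card_eq_one] at h
      obtain ⟨a, ha⟩ := h
      have hane : a = n := by rw [ha] at hsum; simpa using hsum
      have hapos : 0 < a := π.parts_pos (by rw [ha]; simp)
      subst hane
      refine ⟨⟨0, by omega⟩, ?_⟩
      apply Subtype.ext; apply Nat.Partition.ext
      rw [gPart_parts]
      show Multiset.filter (· ≠ 0) {a - 0, 0} = π.parts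
      rw [ha]
      have hn : 0 < a := hapos
      have : Multiset.filter (· ≠ 0) ({a - 0, 0} : Multiset ℕ) = {a} := by
        rw [show ({a - 0, 0} : Multiset ℕ) = (a - 0) ::ₘ {0} from rfl,
          Multiset.filter_cons_of_pos _ (by simp; omega),
          Multiset.filter_singleton, if_neg (by simp)]
        simp
      rw [this]
    · rw [Multiset.card_eq_two] at h
      obtain ⟨a, b, hab⟩ := h
      have hsum2 : a + b = n := by rw [hab] at hsum; simpa using hsum
      have hapos : 0 < a := π.parts_pos (by rw [hab]; simp)
      have hbpos : 0 < b := π.parts_pos (by rw [hab]; simp)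
      refine ⟨⟨a ⊓ b, by simp [Nat.lt_succ_iff]; omega⟩, ?_⟩
      apply Subtype.ext; apply Nat.Partition.ext
      rw [gPart_parts, hab]
      have hinf : 0 < a ⊓ b := lt_inf_iff.2 ⟨hapos, hbpos⟩
      have hsup : 0 < a ⊔ b := lt_sup_iff.2 (Or.inl hapos)
      have h1 : n - a ⊓ b = a ⊔ b := by
        rcases le_total a b with hle | hle
        · rw [sup_eq_right.2 hle, inf_eq_left.2 hle]; omega
        · rw [sup_eq_left.2 hle, inf_eq_right.2 hle]; omega
      rw [h1]
      have h2 : Multiset.filter (· ≠ 0) ({a ⊔ b, a ⊓ b} : Multiset ℕ) =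
          {a ⊔ b, a ⊓ b} := by
        rw [Multiset.filter_eq_self]
        intro x hx
        simp at hx
        rcases hx with rfl | rfl <;> omega
      rw [h2]
      rcases le_total a b with hle | hle
      · rw [sup_eq_right.2 hle, inf_eq_left.2 hle, Multiset.pair_comm]
      · rw [sup_eq_left.2 hle, inf_eq_right.2 hle]

lemma countTwo (n : ℕ) :
    Nat.card {π : Nat.Partition n // Multiset.card π.parts ≤ 2} = n / 2 + 1 := by
  rw [← Nat.card_congr (Equiv.ofBijective _ (gPart_bijective n))]
  simp

lemma pBdd_eq (A N : ℕ) :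
    pBdd ((N : ℤ) - A) 2 N = if A ≤ N then (N - A) / 2 + 1 else 0 := by
  unfold pBdd
  by_cases h : A ≤ N
  · rw [if_pos (by omega), if_pos h]
    have ht : ((N : ℤ) - A).toNat = N - A := by omega
    rw [ht]
    have he : {π : Nat.Partition (N - A) //
        Multiset.card π.parts ≤ 2 ∧ ∀ i ∈ π.parts, i ≤ N} ≃
        {π : Nat.Partition (N - A) // Multiset.card π.parts ≤ 2} := by
      apply Equiv.subtypeEquivRight
      intro π
      constructor
      · exact fun h => h.1
      · intro h2
        refine ⟨h2, fun i hi => ?_⟩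
        have : i ≤ π.parts.sum := Multiset.le_sum_of_mem hi
        rw [π.parts_sum] at this
        omega
    rw [Nat.card_congr he, countTwo]
  · rw [if_neg (by omega), if_neg h]

lemma geom : (PowerSeries.mk fun d : ℕ => ((d / 2 + 1 : ℕ) : ℤ)) *
    ((1 - X) * (1 - X ^ 2)) = 1 := by
  set g := PowerSeries.mk fun d : ℕ => ((d / 2 + 1 : ℕ) : ℤ) with hg
  have expand : g * ((1 - X) * (1 - X ^ 2)) =
      g - g * X ^ 1 - g * X ^ 2 + g * X ^ 3 := by ring
  rw [expand]
  ext n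
  simp only [map_add, map_sub, coeff_mul_X_pow', coeff_one, hg, coeff_mk]
  rcases Nat.lt_or_ge n 3 with h | h
  · interval_cases n <;> simp
  · rw [if_pos (by omega), if_pos (by omega), if_pos (by omega), if_neg (by omega)]
    push_cast
    have h1 : n - 1 ≥ 0 := by omega
    omega

/-- `∑_{N≥0} p(N-A,2,N) z^N = z^A / ((1-z)(1-z^2))` as formal power series. -/
theorem stmt2 (A : ℕ) :
    (PowerSeries.mk fun N : ℕ => (pBdd ((N : ℤ) - A) 2 N : ℤ)) *
      ((1 - X) * (1 - X ^ 2)) = X ^ A := by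
  have key : (PowerSeries.mk fun N : ℕ => (pBdd ((N : ℤ) - A) 2 N : ℤ)) =
      X ^ A * PowerSeries.mk fun d : ℕ => ((d / 2 + 1 : ℕ) : ℤ) := by
    ext n
    rw [coeff_mk, coeff_X_pow_mul', pBdd_eq]
    split_ifs with h <;> simp [coeff_mk]
  rw [key, mul_assoc, geom, mul_one]
end

section
/- The generating function identity ∑_{N≥0} p(2N, 4, N) z^N = (1 - z + z^2) / ((1-z)^2 (1-z^2)(1-z^3)) holds as an identity of formal power series. -/
open PowerSeries

/-!
A partition of `2N` into at most four parts that has a part `v > N` has exactly one such part,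
and removing it leaves a partition of `2N - v < N` into at most three parts. Hence
`p(2N,4,N) = p(2N, ≤ 4 parts) - ∑_{i<N} p(i, ≤ 3 parts)`. Removing the first column of the
Young diagram shows `∑ p(n, ≤ m parts) zⁿ = ∏_{i ≤ m} (1 - zⁱ)⁻¹`. Multiplying numerator and
denominator of the case `m = 4` by `(1 + z)(1 + z³)` puts its denominator in `z²`, so its even
part is `∑ p(2N, ≤ 4 parts) z^N = (1 + z²) / ((1 - z)²(1 - z²)(1 - z³))`, while the partial sums
of the case `m = 3` contribute `z / ((1 - z)²(1 - z²)(1 - z³))`.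
-/

open Finset

namespace Multiset

def dropColumn (s : Multiset ℕ) : Multiset ℕ := (s.filter (1 < ·)).map (· - 1)

def addColumn (t : Multiset ℕ) (k : ℕ) : Multiset ℕ := t.map (· + 1) + replicate k 1

lemma card_dropColumn_le (s : Multiset ℕ) : card (dropColumn s) ≤ card s := by
  simpa [dropColumn] using card_le_card (filter_le _ s)

lemma pos_of_mem_dropColumn {s : Multiset ℕ} {x : ℕ} (hx : x ∈ dropColumn s) : 0 < x := by
  grind [dropColumn, mem_map, mem_filter]

lemma pos_of_mem_addColumn {t : Multiset ℕ} {k x : ℕ} (hx : x ∈ addColumn t k) : 0 < x := by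
  grind [addColumn, mem_map, eq_of_mem_replicate]

@[simp]
lemma card_addColumn (t : Multiset ℕ) (k : ℕ) : card (addColumn t k) = card t + k := by
  simp [addColumn]

@[simp]
lemma sum_addColumn (t : Multiset ℕ) (k : ℕ) : (addColumn t k).sum = t.sum + card t + k := by
  simp [addColumn, sum_map_add]

lemma dropColumn_addColumn {t : Multiset ℕ} (ht : ∀ x ∈ t, 0 < x) (k : ℕ) :
    dropColumn (addColumn t k) = t := by
  have hrep : (replicate k 1).filter (1 < ·) = 0 := filter_eq_nil.2 fun a ha => by
    simp [eq_of_mem_replicate ha]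
  rw [dropColumn, addColumn, filter_add, hrep, add_zero, filter_eq_self.2, map_map]
  · simp
  · intro a ha
    obtain ⟨b, hb, rfl⟩ := mem_map.1 ha
    have := ht b hb
    omega

lemma addColumn_dropColumn {s : Multiset ℕ} (hs : ∀ x ∈ s, 0 < x) :
    addColumn (dropColumn s) (card s - card (dropColumn s)) = s := by
  have hones : s.filter (¬ 1 < ·) = replicate (card s - card (dropColumn s)) 1 := by
    rw [eq_replicate]
    refine ⟨?_, fun b hb => ?_⟩
    · have := congrArg card (filter_add_not (1 < ·) s)
      simp only [card_add] at this
      rw [dropColumn, card_map]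
      omega
    · have := hs b (mem_of_mem_filter hb)
      have := of_mem_filter hb
      omega
  have hbig : (dropColumn s).map (· + 1) = s.filter (1 < ·) := by
    rw [dropColumn, map_map]
    conv_rhs => rw [← map_id (s.filter (1 < ·))]
    exact map_congr rfl fun x hx => by
      have := of_mem_filter hx
      simp only [Function.comp_apply, id_eq]
      omega
  rw [addColumn, hbig, ← hones, filter_add_not]

lemma add_le_sum_of_mem {s : Multiset ℕ} {a b : ℕ} (ha : a ∈ s) (hb : b ∈ s)
    (hab : a ≠ b) : a + b ≤ s.sum := by
  have hb' : b ∈ s.erase a := (mem_erase_of_ne hab.symm).2 hb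
  calc a + b ≤ a + (s.erase a).sum := Nat.add_le_add_left (le_sum_of_mem hb') a
    _ = s.sum := sum_erase ha

end Multiset

namespace Nat.Partition

open Multiset

lemma card_parts_le (n : ℕ) (π : n.Partition) : card π.parts ≤ n := by
  simpa [π.parts_sum] using Multiset.card_nsmul_le_sum fun x hx => π.parts_pos hx

def dropColumnEquiv (n m : ℕ) :
    {π : (n + m).Partition // card π.parts = m} ≃ {μ : n.Partition // card μ.parts ≤ m} where
  toFun π := ⟨⟨dropColumn π.1.parts, pos_of_mem_dropColumn, by
      have hs := congrArg sum (addColumn_dropColumn fun _ => π.1.parts_pos)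
      have := card_dropColumn_le π.1.parts
      rw [sum_addColumn, π.1.parts_sum, π.2] at hs
      omega⟩,
    π.2 ▸ card_dropColumn_le _⟩
  invFun μ := ⟨⟨addColumn μ.1.parts (m - card μ.1.parts), pos_of_mem_addColumn, by
      rw [sum_addColumn, μ.1.parts_sum]
      have := μ.2
      omega⟩,
    by rw [card_addColumn]; have := μ.2; omega⟩
  left_inv π := Subtype.ext <| Nat.Partition.ext <| by
    simpa [← π.2] using addColumn_dropColumn fun _ => π.1.parts_pos
  right_inv μ := Subtype.ext <| Nat.Partition.ext <|
    dropColumn_addColumn (fun _ => μ.1.parts_pos) _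

end Nat.Partition

lemma pAtMost_natCast (n m : ℕ) : pAtMost n m = #{π : n.Partition | π.parts.card ≤ m} := by
  simp [pAtMost, Nat.card_eq_fintype_card, Fintype.card_subtype]

lemma pAtMost_of_neg {n : ℤ} (hn : n < 0) (m : ℕ) : pAtMost n m = 0 := by
  simp [pAtMost, not_le.2 hn]

lemma card_filter_card_parts_eq (n m : ℕ) :
    #{π : (n + m).Partition | π.parts.card = m} = pAtMost n m := by
  rw [pAtMost_natCast, ← Fintype.card_subtype, ← Fintype.card_subtype]
  exact Fintype.card_congr (Nat.Partition.dropColumnEquiv n m)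

lemma pAtMost_succ (n : ℤ) (m : ℕ) :
    pAtMost n (m + 1) = pAtMost n m + pAtMost (n - (m + 1)) (m + 1) := by
  rcases lt_or_ge n 0 with hn | hn
  · simp only [pAtMost_of_neg hn, pAtMost_of_neg (show n - (m + 1) < 0 by omega)]
  lift n to ℕ using hn
  have hsplit : pAtMost n (m + 1) = pAtMost n m + #{π : n.Partition | π.parts.card = m + 1} := by
    rw [pAtMost_natCast, pAtMost_natCast,
      ← card_filter_add_card_filter_not (s := {π : n.Partition | π.parts.card ≤ m + 1})
        (fun π => π.parts.card ≤ m), Finset.filter_filter, Finset.filter_filter]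
    congr 2 <;> ext <;> simp only [Finset.mem_filter, Finset.mem_univ, true_and] <;> omega
  rw [hsplit]
  rcases lt_or_ge n (m + 1) with h | h
  · rw [pAtMost_of_neg (show (n : ℤ) - (m + 1) < 0 by omega),
      filter_eq_empty_iff.2 fun π _ hπ => by have := π.card_parts_le; omega, card_empty]
  · obtain ⟨k, rfl⟩ : ∃ k, n = k + (m + 1) := ⟨n - (m + 1), by omega⟩
    rw [card_filter_card_parts_eq]
    push_cast
    ring_nf

lemma pBdd_natCast_s5 (n m N : ℕ) :
    pBdd n m N = #{π : n.Partition | π.parts.card ≤ m ∧ ∀ i ∈ π.parts, i ≤ N} := by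
  simp [pBdd, Nat.card_eq_fintype_card, Fintype.card_subtype]

lemma card_filter_mem_parts {n v : ℕ} (hv : 0 < v) (hvn : v ≤ n) (m : ℕ) :
    #{π : n.Partition | π.parts.card ≤ m + 1 ∧ v ∈ π.parts} = pAtMost (n - v : ℕ) m := by
  rw [pAtMost_natCast, ← Fintype.card_subtype, ← Fintype.card_subtype]
  calc Fintype.card {π : n.Partition // π.parts.card ≤ m + 1 ∧ v ∈ π.parts}
      = Fintype.card {π : {π : n.Partition // v ∈ π.parts} // π.1.parts.card ≤ m + 1} :=
        Fintype.card_congr ((Equiv.subtypeSubtypeEquivSubtypeInter _ _).trans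
          (Equiv.subtypeEquivRight fun _ => and_comm)).symm
    _ = Fintype.card {μ : (n - v).Partition // μ.parts.card ≤ m} :=
        Fintype.card_congr <| (Nat.Partition.partitionWithPartEquiv hv hvn).subtypeEquiv
          fun π => by
            have := Multiset.card_pos_iff_exists_mem.2 ⟨v, π.2⟩
            simp only [Nat.Partition.partitionWithPartEquiv_apply_parts,
              Multiset.card_erase_of_mem π.2, Nat.pred_eq_sub_one]
            omega

lemma pAtMost_eq_pBdd_add_sum {n N : ℕ} (hn : n ≤ 2 * N + 1) (m : ℕ) :
    pAtMost n (m + 1) = pBdd n (m + 1) N + ∑ i ∈ range (n - N), pAtMost i m := by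
  rw [pAtMost_natCast, pBdd_natCast_s5, ← card_filter_add_card_filter_not
    (s := {π : n.Partition | π.parts.card ≤ m + 1}) (fun π => ∀ i ∈ π.parts, i ≤ N),
    Finset.filter_filter, Finset.filter_filter]
  congr 1
  have hexceeds : ({π : n.Partition | π.parts.card ≤ m + 1 ∧ ¬ ∀ i ∈ π.parts, i ≤ N} : Finset _) =
      (range (n - N)).biUnion
        fun i => {π : n.Partition | π.parts.card ≤ m + 1 ∧ n - i ∈ π.parts} := by
    ext π
    simp only [Finset.mem_filter, Finset.mem_univ, true_and, mem_biUnion, mem_range, not_forall,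
      not_le, exists_prop]
    constructor
    · rintro ⟨hcard, v, hv, hNv⟩
      have := Nat.Partition.le_of_mem_parts hv
      exact ⟨n - v, by omega, hcard, by rwa [Nat.sub_sub_self this]⟩
    · rintro ⟨i, hi, hcard, hv⟩
      exact ⟨hcard, n - i, hv, by omega⟩
  rw [hexceeds, card_biUnion]
  · refine sum_congr rfl fun i hi => ?_
    rw [mem_range] at hi
    rw [card_filter_mem_parts (by omega) (by omega), Nat.sub_sub_self (by omega)]
  · intro i hi j hj hij
    simp only [coe_range, Set.mem_Iio] at hi hj
    refine disjoint_left.2 fun π hπi hπj => ?_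
    simp only [Finset.mem_filter] at hπi hπj
    have := Multiset.add_le_sum_of_mem hπi.2.2 hπj.2.2 (by omega)
    rw [π.parts_sum] at this
    omega

section GeneratingFunctions

variable {R : Type*} [CommRing R]

lemma mk_pAtMost_succ_mul_one_sub_X_pow (m : ℕ) :
    PowerSeries.mk (fun n : ℕ => (pAtMost n (m + 1) : R)) * (1 - X ^ (m + 1)) =
      PowerSeries.mk fun n : ℕ => (pAtMost n m : R) := by
  ext n
  rw [mul_sub, mul_one, map_sub, coeff_mul_X_pow', coeff_mk, coeff_mk, pAtMost_succ n m]
  split_ifs with h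
  · rw [coeff_mk, Nat.cast_sub h]
    push_cast
    ring
  · rw [pAtMost_of_neg (show (n : ℤ) - (m + 1) < 0 by omega)]
    simp

lemma mk_pAtMost_mul_prod (m : ℕ) :
    PowerSeries.mk (fun n : ℕ => (pAtMost n m : R)) * ∏ i ∈ range m, (1 - X ^ (i + 1)) = 1 := by
  induction m with
  | zero =>
    ext (_ | n)
    · simp [pAtMost_natCast]
    · have hne : ∀ π : (n + 1).Partition, π.parts ≠ 0 := fun π h => by
        simpa [h] using π.parts_sum
      simp [pAtMost_natCast, coeff_one, hne]
  | succ m ih =>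
    rw [prod_range_succ, mul_comm _ (1 - X ^ (m + 1)), ← mul_assoc,
      mk_pAtMost_succ_mul_one_sub_X_pow, ih]

noncomputable def decimate (p : ℕ) (f : R⟦X⟧) : R⟦X⟧ := PowerSeries.mk fun n => coeff (p * n) f

@[simp]
lemma coeff_decimate (p n : ℕ) (f : R⟦X⟧) : coeff n (decimate p f) = coeff (p * n) f :=
  coeff_mk _ _

lemma decimate_add (p : ℕ) (f g : R⟦X⟧) : decimate p (f + g) = decimate p f + decimate p g := by
  ext n
  simp

lemma decimate_mul_expand {p : ℕ} (hp : p ≠ 0) (f : R⟦X⟧) (q : Polynomial R) :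
    decimate p (f * expand p hp q) = decimate p f * (q : R⟦X⟧) := by
  induction q using Polynomial.induction_on' with
  | add q r hq hr => rw [Polynomial.coe_add, map_add, mul_add, mul_add, decimate_add, hq, hr]
  | monomial j c =>
    ext n
    rw [Polynomial.coe_monomial, expand_monomial, monomial_eq_C_mul_X_pow,
      monomial_eq_C_mul_X_pow, mul_left_comm, coeff_decimate, coeff_C_mul, mul_left_comm,
      coeff_C_mul, coeff_mul_X_pow', coeff_mul_X_pow']
    by_cases h : j ≤ n
    · rw [if_pos (Nat.mul_le_mul_left p h), if_pos h, coeff_decimate, Nat.mul_sub]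
    · rw [if_neg (by rwa [Nat.mul_le_mul_left_iff (Nat.pos_of_ne_zero hp)]), if_neg h]

lemma mk_pAtMost_two_mul_four_mul :
    PowerSeries.mk (fun N : ℕ => (pAtMost (2 * (N : ℤ)) 4 : R)) *
      ((1 - X) ^ 2 * (1 - X ^ 2) * (1 - X ^ 3)) = 1 + X ^ 2 := by
  have h4 := mk_pAtMost_mul_prod (R := R) 4
  simp only [prod_range_succ, prod_range_zero] at h4
  have hbisect : PowerSeries.mk (fun N : ℕ => (pAtMost (2 * (N : ℤ)) 4 : R)) =
      decimate 2 (PowerSeries.mk fun n : ℕ => (pAtMost n 4 : R)) := by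
    ext N
    simp
  have hexpand : expand 2 two_ne_zero
      (((1 - Polynomial.X) ^ 2 * (1 - Polynomial.X ^ 2) * (1 - Polynomial.X ^ 3) :
        Polynomial R) : R⟦X⟧) = (1 - X ^ 2) ^ 2 * (1 - X ^ 4) * (1 - X ^ 6) := by
    simp [← pow_mul]
  calc _ = decimate 2 (PowerSeries.mk (fun n : ℕ => (pAtMost n 4 : R)) *
        ((1 - X ^ 2) ^ 2 * (1 - X ^ 4) * (1 - X ^ 6))) := by
        rw [hbisect, ← hexpand, decimate_mul_expand]
        push_cast
        rfl
    _ = decimate 2 (1 + X + X ^ 3 + X ^ 4) := by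
        rw [show PowerSeries.mk (fun n : ℕ => (pAtMost n 4 : R)) *
            ((1 - X ^ 2) ^ 2 * (1 - X ^ 4) * (1 - X ^ 6)) = 1 + X + X ^ 3 + X ^ 4 by
          linear_combination (1 + X) * (1 + X ^ 3) * h4]
    _ = 1 + X ^ 2 := by
        ext n
        simp only [coeff_decimate, map_add, coeff_one, coeff_X, coeff_X_pow]
        split_ifs <;> first | omega | simp

lemma mk_sum_range_mul_one_sub_X (f : ℕ → R) :
    PowerSeries.mk (fun n => ∑ i ∈ range n, f i) * (1 - X) = X * PowerSeries.mk f := by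
  ext (_ | n)
  · simp
  · simp [mul_sub, coeff_succ_X_mul, coeff_succ_mul_X, sum_range_succ]

end GeneratingFunctions

/-- `∑_{N≥0} p(2N,4,N) z^N = (1-z+z^2) / ((1-z)^2 (1-z^2)(1-z^3))`. -/
theorem stmt5 :
    (PowerSeries.mk fun N : ℕ => (pBdd (2 * (N : ℤ)) 4 N : ℤ)) *
      ((1 - X) ^ 2 * (1 - X ^ 2) * (1 - X ^ 3)) =
    1 - X + X ^ 2 := by
  have hsplit : PowerSeries.mk (fun N : ℕ => (pBdd (2 * (N : ℤ)) 4 N : ℤ)) =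
      PowerSeries.mk (fun N : ℕ => (pAtMost (2 * (N : ℤ)) 4 : ℤ)) -
        PowerSeries.mk fun N => ∑ i ∈ range N, (pAtMost i 3 : ℤ) := by
    ext N
    have := pAtMost_eq_pBdd_add_sum (n := 2 * N) (N := N) (by omega) 3
    rw [show 2 * N - N = N by omega] at this
    push_cast at this
    simp [this]
  have h3 := mk_pAtMost_mul_prod (R := ℤ) 3
  simp only [prod_range_succ, prod_range_zero] at h3
  rw [hsplit]
  linear_combination mk_pAtMost_two_mul_four_mul (R := ℤ) - X * h3 -
    (1 - X) * (1 - X ^ 2) * (1 - X ^ 3) * mk_sum_range_mul_one_sub_X fun i => (pAtMost i 3 : ℤ)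
end

section
/- For every nonnegative integer N, the coefficient sequence of the Gaussian polynomial [N+3 choose 3]_q is unimodal: for all A with 0 ≤ A ≤ ⌊3N/2⌋ - 1, p(⌊3N/2⌋ - A, 3, N) ≥ p(⌊3N/2⌋ - A - 1, 3, N). -/
/-!
A partition of `n` into at most three parts of size at most `N` is the same as a triple
`N ≥ x ≥ y ≥ z ≥ 0` with `x + y + z = n`. If `2 (n + 1) ≤ 3 N`, the triples of sum `n` inject into
those of sum `n + 1`: raise `x` by one when `x < N`; when `x = N`, send `(N, y, z)` to
`(w, w, n + 1 - 2 w)` with `w = y + ⌊(n + 1) / 2⌋ + N - n`; the condition `2 (n + 1) ≤ 3 N` is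
what keeps `w` between `(n + 1) / 3` and `(n + 1) / 2`, so that this triple is again sorted. The
images of the two kinds are disjoint, since only the second kind has two equal largest parts.
-/

open Finset

lemma List.sum_filter_ne_zero {M : Type*} [AddMonoid M] [DecidableEq M] (l : List M) :
    (l.filter (· ≠ 0)).sum = l.sum := by
  induction l with
  | nil => rfl
  | cons a l ih =>
    rw [List.filter_cons]
    by_cases ha : a = 0 <;> simp_all

lemma List.getD_succ_le_getD_of_pairwise_ge {l : List ℕ} (hl : l.Pairwise (· ≥ ·)) (i : ℕ) :
    l.getD (i + 1) 0 ≤ l.getD i 0 := by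
  rcases lt_or_ge (i + 1) l.length with hi | hi
  · rw [getD_eq_getElem _ _ hi, getD_eq_getElem _ _ (by omega)]
    exact List.pairwise_iff_getElem.1 hl _ _ _ _ (Nat.lt_succ_self i)
  · rw [getD_eq_default _ _ hi]
    exact Nat.zero_le _

lemma List.eq_filter_ne_zero_getD_three {l : List ℕ} (h0 : 0 ∉ l) (hlen : l.length ≤ 3) :
    l = [l.getD 0 0, l.getD 1 0, l.getD 2 0].filter (· ≠ 0) := by
  match l, hlen with
  | [], _ => rfl
  | [a], _ => simp_all [eq_comm]
  | [a, b], _ => simp_all [eq_comm]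
  | [a, b, c], _ => simp_all [eq_comm]

def largestThree (s : Multiset ℕ) : ℕ × ℕ × ℕ :=
  ((s.sort (· ≥ ·)).getD 0 0, (s.sort (· ≥ ·)).getD 1 0, (s.sort (· ≥ ·)).getD 2 0)

lemma largestThree_sorted (s : Multiset ℕ) :
    (largestThree s).2.1 ≤ (largestThree s).1 ∧ (largestThree s).2.2 ≤ (largestThree s).2.1 :=
  ⟨List.getD_succ_le_getD_of_pairwise_ge (Multiset.pairwise_sort _ _) 0,
    List.getD_succ_le_getD_of_pairwise_ge (Multiset.pairwise_sort _ _) 1⟩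

lemma eq_filter_ne_zero_largestThree {s : Multiset ℕ} (h0 : 0 ∉ s) (hcard : s.card ≤ 3) :
    s = ↑([(largestThree s).1, (largestThree s).2.1, (largestThree s).2.2].filter (· ≠ 0)) := by
  conv_lhs => rw [← Multiset.sort_eq s (· ≥ ·)]
  congr 1
  exact List.eq_filter_ne_zero_getD_three (by simpa using h0) (by simpa using hcard)

lemma largestThree_filter_ne_zero {x y z : ℕ} (hyx : y ≤ x) (hzy : z ≤ y) :
    largestThree ↑([x, y, z].filter (· ≠ 0)) = (x, y, z) := by
  have hsorted : ([x, y, z].filter (· ≠ 0)).Pairwise (· ≥ ·) :=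
    List.Pairwise.filter _ (by simp [hyx, hzy, hzy.trans hyx])
  rw [largestThree, Multiset.coe_sort, List.mergeSort_eq_self _ (by simpa using hsorted)]
  by_cases hx : x = 0 <;> by_cases hy : y = 0 <;> by_cases hz : z = 0 <;> simp [hx, hy, hz] <;>
    omega

def sortedTriples (N n : ℕ) : Finset (ℕ × ℕ × ℕ) :=
  (range (N + 1) ×ˢ range (N + 1) ×ˢ range (N + 1)).filter
    fun t => t.2.1 ≤ t.1 ∧ t.2.2 ≤ t.2.1 ∧ t.1 + t.2.1 + t.2.2 = n

lemma mem_sortedTriples {N n : ℕ} {t : ℕ × ℕ × ℕ} :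
    t ∈ sortedTriples N n ↔ t.1 ≤ N ∧ t.2.1 ≤ t.1 ∧ t.2.2 ≤ t.2.1 ∧ t.1 + t.2.1 + t.2.2 = n := by
  simp only [sortedTriples, mem_filter, mem_product, mem_range]
  omega

def Nat.Partition.ofTriple {k : ℕ} (t : ℕ × ℕ × ℕ) (h : t.1 + t.2.1 + t.2.2 = k) :
    Nat.Partition k where
  parts := ↑([t.1, t.2.1, t.2.2].filter (· ≠ 0))
  parts_pos hi := Nat.pos_of_ne_zero (by simpa using (List.mem_filter.1 hi).2)
  parts_sum := by rw [Multiset.sum_coe, List.sum_filter_ne_zero, ← h]; simp [add_assoc]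

lemma largestThree_mem_sortedTriples {N k : ℕ} (π : Nat.Partition k)
    (hcard : π.parts.card ≤ 3) (hN : ∀ i ∈ π.parts, i ≤ N) :
    largestThree π.parts ∈ sortedTriples N k := by
  have hparts := eq_filter_ne_zero_largestThree (fun h => (π.parts_pos h).false) hcard
  have hsorted := largestThree_sorted π.parts
  generalize largestThree π.parts = t at hparts hsorted ⊢
  refine mem_sortedTriples.2 ⟨?_, hsorted.1, hsorted.2, ?_⟩
  · rcases Nat.eq_zero_or_pos t.1 with h | h
    · omega
    · exact hN _ (by rw [hparts]; simp [h.ne'])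
  · rw [← π.parts_sum, hparts, Multiset.sum_coe, List.sum_filter_ne_zero]
    simp [add_assoc]

def partitionEquivSortedTriples (N k : ℕ) :
    {π : Nat.Partition k // π.parts.card ≤ 3 ∧ ∀ i ∈ π.parts, i ≤ N} ≃ sortedTriples N k where
  toFun π := ⟨largestThree π.1.parts, largestThree_mem_sortedTriples π.1 π.2.1 π.2.2⟩
  invFun t :=
    have ht := mem_sortedTriples.1 t.2
    ⟨.ofTriple t.1 ht.2.2.2, List.length_filter_le _ _, fun i hi => by
      simp only [Nat.Partition.ofTriple, Multiset.mem_coe, List.mem_filter, List.mem_cons,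
        List.not_mem_nil, or_false] at hi
      omega⟩
  left_inv π := Subtype.ext (Nat.Partition.ext
    (eq_filter_ne_zero_largestThree (fun h => (π.1.parts_pos h).false) π.2.1).symm)
  right_inv t := Subtype.ext (largestThree_filter_ne_zero (mem_sortedTriples.1 t.2).2.1
    (mem_sortedTriples.1 t.2).2.2.1)

lemma card_sortedTriples_le_succ {N n : ℕ} (h : 2 * (n + 1) ≤ 3 * N) :
    #(sortedTriples N n) ≤ #(sortedTriples N (n + 1)) := by
  let w (y : ℕ) := y + ((n + 1) / 2 + N - n)
  refine card_le_card_of_injOn (fun t => if t.1 < N then (t.1 + 1, t.2.1, t.2.2)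
    else (w t.2.1, w t.2.1, n + 1 - 2 * w t.2.1)) ?_ ?_
  · rintro ⟨x, y, z⟩ ht
    simp only [mem_coe, mem_sortedTriples] at ht
    dsimp only
    split_ifs <;> simp only [mem_coe, mem_sortedTriples, w] <;> omega
  · rintro ⟨x, y, z⟩ ht ⟨x', y', z'⟩ ht' he
    simp only [mem_coe, mem_sortedTriples] at ht ht'
    dsimp only at he
    split_ifs at he <;> simp only [Prod.mk.injEq, w] at he ⊢ <;> omega

lemma pBdd_natCast_three (N k : ℕ) : pBdd k 3 N = #(sortedTriples N k) := by
  rw [pBdd, if_pos (Int.natCast_nonneg k), Int.toNat_natCast,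
    Nat.card_congr (partitionEquivSortedTriples N k), Nat.card_eq_finsetCard]

/-- Unimodality of the coefficients of `[N+3 choose 3]_q`. -/
theorem stmt8 (N A : ℕ) (hA : A + 1 ≤ 3 * N / 2) :
    pBdd (((3 * N / 2 : ℕ) : ℤ) - A - 1) 3 N ≤
      pBdd (((3 * N / 2 : ℕ) : ℤ) - A) 3 N := by
  have hlower : ((3 * N / 2 : ℕ) : ℤ) - A - 1 = ((3 * N / 2 - A - 1 : ℕ) : ℤ) := by omega
  have hupper : ((3 * N / 2 : ℕ) : ℤ) - A = ((3 * N / 2 - A - 1 + 1 : ℕ) : ℤ) := by omega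
  rw [hlower, hupper, pBdd_natCast_three, pBdd_natCast_three]
  exact card_sortedTriples_le_succ (by omega)
end

section
/- For every nonnegative integer N, the coefficient sequence of the Gaussian polynomial [N+4 choose 4]_q is unimodal: for all A with 0 ≤ A ≤ 2N - 1, p(2N - A, 4, N) ≥ p(2N - A - 1, 4, N). -/
/-!
A partition of `n` into at most four parts of size at most `N` is a quadruple
`N ≥ a ≥ b ≥ c ≥ d ≥ 0` with sum `n`. For `n < 2N` the quadruples of sum `n` inject into those of
sum `n + 1`: if `a < N`, raise `a` by one. Otherwise `a = N`, so `b + c + d < N`, and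
`(N, b, c, d)` is sent to a quadruple whose two largest entries are equal, which the first rule
never produces; on this branch `(b, c, d)` can be read back from the image.
-/

open Multiset

lemma Multiset.filter_pos_add_replicate_zero (s : Multiset ℕ) :
    s.filter (0 < ·) + replicate (card s - card (s.filter (0 < ·))) 0 = s := by
  conv_rhs => rw [← filter_add_not (0 < ·) s]
  have hcard := congrArg card (filter_add_not (0 < ·) s)
  rw [card_add] at hcard
  congr 1
  symm
  refine eq_replicate.2 ⟨by omega, fun b hb => ?_⟩
  simpa using of_mem_filter hb

lemma Multiset.sum_filter_pos (s : Multiset ℕ) : (s.filter (0 < ·)).sum = s.sum := by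
  conv_rhs => rw [← s.filter_pos_add_replicate_zero]
  simp

def Nat.Partition.padEquiv (n m N : ℕ) :
    {π : n.Partition // card π.parts ≤ m ∧ ∀ i ∈ π.parts, i ≤ N} ≃
      {s : Multiset ℕ // card s = m ∧ s.sum = n ∧ ∀ i ∈ s, i ≤ N} where
  toFun π := ⟨π.1.parts + replicate (m - card π.1.parts) 0, by
    obtain ⟨π, hcard, hle⟩ := π
    refine ⟨by simp; omega, by simp [π.parts_sum], fun i hi => ?_⟩
    rcases mem_add.1 hi with hi | hi
    · exact hle i hi
    · simp [eq_of_mem_replicate hi]⟩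
  invFun s := ⟨⟨s.1.filter (0 < ·), of_mem_filter, by rw [sum_filter_pos, s.2.2.1]⟩,
    s.2.1 ▸ card_le_card (filter_le _ _), fun i hi => s.2.2.2 i (mem_of_mem_filter hi)⟩
  left_inv π := by
    refine Subtype.ext (Nat.Partition.ext ?_)
    dsimp only
    rw [filter_add, filter_eq_self.2 fun _ => π.1.parts_pos,
      filter_eq_nil.2 fun _ hi => by simp [eq_of_mem_replicate hi], add_zero]
  right_inv s := by
    obtain ⟨s, rfl, -⟩ := s
    exact Subtype.ext s.filter_pos_add_replicate_zero

def sortedQuads (n N : ℕ) : Finset (ℕ × ℕ × ℕ × ℕ) :=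
  (Finset.range (N + 1) ×ˢ Finset.range (N + 1) ×ˢ Finset.range (N + 1) ×ˢ
      Finset.range (N + 1)).filter
    fun q => q.2.2.2 ≤ q.2.2.1 ∧ q.2.2.1 ≤ q.2.1 ∧ q.2.1 ≤ q.1 ∧
      q.1 + q.2.1 + q.2.2.1 + q.2.2.2 = n

lemma mem_sortedQuads {n N a b c d : ℕ} :
    (a, b, c, d) ∈ sortedQuads n N ↔
      d ≤ c ∧ c ≤ b ∧ b ≤ a ∧ a ≤ N ∧ a + b + c + d = n := by
  simp only [sortedQuads, Finset.mem_filter, Finset.mem_product, Finset.mem_range]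
  omega

lemma card_multisets_eq_card_sortedQuads (n N : ℕ) :
    Nat.card {s : Multiset ℕ // card s = 4 ∧ s.sum = n ∧ ∀ i ∈ s, i ≤ N} =
      (sortedQuads n N).card := by
  rw [← Nat.card_eq_finsetCard]
  symm
  refine Nat.card_eq_of_bijective
    (fun ⟨(a, b, c, d), hq⟩ => ⟨↑[a, b, c, d], ?_⟩) ⟨?_, ?_⟩
  · rw [mem_sortedQuads] at hq
    refine ⟨rfl, by simp; omega, ?_⟩
    simp only [mem_coe, List.mem_cons, List.not_mem_nil, or_false]
    omega
  · rintro ⟨⟨a, b, c, d⟩, hq⟩ ⟨⟨a', b', c', d'⟩, hq'⟩ h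
    rw [mem_sortedQuads] at hq hq'
    have hsorted : ∀ {a b c d : ℕ}, d ≤ c → c ≤ b → b ≤ a → [a, b, c, d].Pairwise (· ≥ ·) := by
      intros
      simp
      omega
    have := (coe_eq_coe.1 (congrArg Subtype.val h)).eq_of_pairwise'
      (hsorted hq.1 hq.2.1 hq.2.2.1) (hsorted hq'.1 hq'.2.1 hq'.2.2.1)
    simp only [List.cons.injEq, and_true] at this
    simp [this]
  · rintro ⟨s, hcard, hsum, hle⟩
    obtain ⟨a, b, c, d, hl⟩ : ∃ a b c d, s.sort (· ≥ ·) = [a, b, c, d] := by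
      have hlen : (s.sort (· ≥ ·)).length = 4 := by rw [length_sort, hcard]
      match s.sort (· ≥ ·), hlen with
      | [a, b, c, d], _ => exact ⟨a, b, c, d, rfl⟩
    have hs : (↑[a, b, c, d] : Multiset ℕ) = s := hl ▸ sort_eq s _
    have hsorted := hl ▸ pairwise_sort s (· ≥ ·)
    subst hs
    exact ⟨⟨(a, b, c, d), mem_sortedQuads.2 (by simp at hsorted hsum hle; omega)⟩, rfl⟩

def raiseQuad (N : ℕ) : ℕ × ℕ × ℕ × ℕ → ℕ × ℕ × ℕ × ℕ
  | (a, b, c, d) =>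
    if a < N then (a + 1, b, c, d)
    else
      let r := N + 1 - (b + c + d)
      (b + d + r / 2, b + d + r / 2, c + d + r % 2, c - d)

lemma card_sortedQuads_le_succ {n N : ℕ} (hn : n + 1 ≤ 2 * N) :
    (sortedQuads n N).card ≤ (sortedQuads (n + 1) N).card := by
  refine Finset.card_le_card_of_injOn (raiseQuad N) ?_ ?_
  · rintro ⟨a, b, c, d⟩ hq
    rw [Finset.mem_coe, mem_sortedQuads] at hq
    simp only [raiseQuad]
    split_ifs <;> rw [Finset.mem_coe, mem_sortedQuads] <;> omega
  · rintro ⟨a, b, c, d⟩ hq ⟨a', b', c', d'⟩ hq' h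
    rw [Finset.mem_coe, mem_sortedQuads] at hq hq'
    simp only [raiseQuad] at h
    split_ifs at h <;> simp only [Prod.mk.injEq] at h ⊢ <;> omega

lemma pBdd_four_natCast (n N : ℕ) : pBdd n 4 N = (sortedQuads n N).card := by
  rw [pBdd, if_pos n.cast_nonneg, Int.toNat_natCast,
    Nat.card_congr (Nat.Partition.padEquiv n 4 N), card_multisets_eq_card_sortedQuads]

/-- Unimodality of the coefficients of `[N+4 choose 4]_q`. -/
theorem stmt9 (N A : ℕ) (hA : A + 1 ≤ 2 * N) :
    pBdd (2 * (N : ℤ) - A - 1) 4 N ≤ pBdd (2 * (N : ℤ) - A) 4 N := by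
  obtain ⟨n, hn⟩ : ∃ n : ℕ, (n : ℤ) = 2 * N - A - 1 := ⟨2 * N - A - 1, by omega⟩
  have hsucc : 2 * (N : ℤ) - A = ((n + 1 : ℕ) : ℤ) := by push_cast; omega
  rw [← hn, hsucc, pBdd_four_natCast, pBdd_four_natCast]
  exact card_sortedQuads_le_succ (by omega)
end

section
/- For all nonnegative integers N, p(⌊3N/2⌋, 3, N) - p(⌊3N/2⌋ - 1, 3, N) equals 1 if N ≡ 0 (mod 4) and 0 if N ≡ 1, 2, or 3 (mod 4). -/
/-!
A partition of `n` into at most three parts, each at most `N`, is the same as a triple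
`x ≤ y ≤ z ≤ N` with `x + y + z = n` (pad with zeros and sort). Subtracting one from every
entry matches the triples with `x ≠ 0` and `z ≠ N` with the triples for `(n - 3, N - 2)`; the
two boundary slices `x = 0` and `z = N` are intervals, counted explicitly. Since `⌊3N/2⌋`
drops by exactly `3` when `N` drops by `2`, this yields a recursion for the central difference
in steps `N ↦ N - 2`, which settles it from the cases `N = 1, 2`.
-/

open Finset

namespace Multiset

theorem filter_ne_zero_add_replicate_zero (s : Multiset ℕ) :
    s.filter (· ≠ 0) + replicate (card s - card (s.filter (· ≠ 0))) 0 = s := by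
  have hzeros : s.filter (fun i => ¬i ≠ 0) = replicate (card (s.filter fun i => ¬i ≠ 0)) 0 :=
    eq_replicate.2 ⟨rfl, fun b hb => by simpa using of_mem_filter hb⟩
  have hsplit := filter_add_not (· ≠ 0) s
  have hcard := congrArg card hsplit
  rw [card_add] at hcard
  rw [← hcard, Nat.add_sub_cancel_left, ← hzeros, hsplit]

theorem filter_ne_zero_add_replicate_zero_of_forall_pos {s : Multiset ℕ}
    (hs : ∀ i ∈ s, 0 < i) (j : ℕ) : (s + replicate j 0).filter (· ≠ 0) = s := by
  rw [filter_add, filter_eq_self.2 fun i hi => (hs i hi).ne',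
    filter_eq_nil.2 fun i hi => by simp [eq_of_mem_replicate hi], add_zero]

variable {α : Type*} [LinearOrder α]

theorem exists_eq_coe_of_card_eq_three {s : Multiset α} (hs : card s = 3) :
    ∃ x y z, x ≤ y ∧ y ≤ z ∧ s = (([x, y, z] : List α) : Multiset α) := by
  have hlen : s.sort.length = 3 := by rw [length_sort, hs]
  have hsorted := pairwise_sort s (· ≤ ·)
  have hcoe := sort_eq s (· ≤ ·)
  generalize s.sort = l at hlen hsorted hcoe
  match l, hlen with
  | [x, y, z], _ =>
    simp only [List.pairwise_cons, List.mem_cons, List.not_mem_nil] at hsorted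
    exact ⟨x, y, z, hsorted.1 y (by simp), hsorted.2.1 z (by simp), hcoe.symm⟩

theorem sort_coe_of_pairwise {l : List α} (hl : l.Pairwise (· ≤ ·)) :
    (l : Multiset α).sort = l :=
  List.mergeSort_eq_self _ hl

end Multiset

def boundedMultisets (n k N : ℕ) : Set (Multiset ℕ) :=
  {s | Multiset.card s = k ∧ (∀ i ∈ s, i ≤ N) ∧ s.sum = n}

def Nat.Partition.boundedEquivMultisets (n k N : ℕ) :
    {π : n.Partition // Multiset.card π.parts ≤ k ∧ ∀ i ∈ π.parts, i ≤ N} ≃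
      boundedMultisets n k N where
  toFun π := ⟨π.1.parts + Multiset.replicate (k - Multiset.card π.1.parts) 0,
    by simp [π.2.1],
    fun i hi => (Multiset.mem_add.1 hi).elim (π.2.2 i)
      fun hi => by simp [Multiset.eq_of_mem_replicate hi],
    by simp [π.1.parts_sum]⟩
  invFun s := ⟨.ofSums n s.1 s.2.2.2,
    (Multiset.card_le_card (Multiset.filter_le _ _)).trans_eq s.2.1,
    fun i hi => s.2.2.1 i (Multiset.mem_of_mem_filter hi)⟩
  left_inv π := Subtype.ext <| Nat.Partition.ext <|
    Multiset.filter_ne_zero_add_replicate_zero_of_forall_pos (fun _ => π.1.parts_pos) _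
  right_inv s := Subtype.ext <| by
    simpa [s.2.1] using Multiset.filter_ne_zero_add_replicate_zero s.1

def boxTriples (n N : ℕ) : Finset (ℕ × ℕ × ℕ) :=
  (range (N + 1) ×ˢ range (N + 1) ×ˢ range (N + 1)).filter
    fun t => t.1 ≤ t.2.1 ∧ t.2.1 ≤ t.2.2 ∧ t.1 + t.2.1 + t.2.2 = n

@[simp]
theorem mem_boxTriples {n N x y z : ℕ} :
    (x, y, z) ∈ boxTriples n N ↔ x ≤ y ∧ y ≤ z ∧ z ≤ N ∧ x + y + z = n := by
  simp only [boxTriples, mem_filter, mem_product, mem_range]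
  omega

theorem coe_mem_boundedMultisets {n N x y z : ℕ} (h : (x, y, z) ∈ boxTriples n N) :
    (([x, y, z] : List ℕ) : Multiset ℕ) ∈ boundedMultisets n 3 N := by
  rw [mem_boxTriples] at h
  simp only [boundedMultisets, Set.mem_ofPred_eq, Multiset.coe_card, Multiset.mem_coe,
    List.mem_cons, List.not_mem_nil, or_false, Multiset.sum_coe, List.sum_cons, List.sum_nil]
  refine ⟨rfl, ?_, by omega⟩
  rintro i (rfl | rfl | rfl) <;> omega

theorem card_boundedMultisets_three (n N : ℕ) :
    Nat.card (boundedMultisets n 3 N) = #(boxTriples n N) := by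
  rw [← Nat.card_eq_finsetCard]
  refine (Nat.card_eq_of_bijective (fun t => ⟨_, coe_mem_boundedMultisets t.2⟩) ⟨?_, ?_⟩).symm
  · rintro ⟨⟨x, y, z⟩, ht⟩ ⟨⟨x', y', z'⟩, ht'⟩ h
    rw [mem_boxTriples] at ht ht'
    have hsort := congrArg Multiset.sort (congrArg Subtype.val h)
    rw [Multiset.sort_coe_of_pairwise (by simp; omega),
      Multiset.sort_coe_of_pairwise (by simp; omega)] at hsort
    simp_all
  · rintro ⟨s, hcard, hN, hsum⟩
    obtain ⟨x, y, z, hxy, hyz, rfl⟩ := Multiset.exists_eq_coe_of_card_eq_three hcard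
    simp only [Multiset.mem_coe, List.mem_cons, List.not_mem_nil, or_false, forall_eq_or_imp,
      forall_eq, Multiset.sum_coe, List.sum_cons, List.sum_nil, add_zero] at hN hsum
    exact ⟨⟨(x, y, z), mem_boxTriples.2 ⟨hxy, hyz, hN.2.2, by omega⟩⟩, rfl⟩

theorem pBdd_three_eq_card_boxTriples (n N : ℕ) : pBdd n 3 N = #(boxTriples n N) := by
  rw [pBdd, if_pos (Int.natCast_nonneg n), Int.toNat_natCast,
    Nat.card_congr (Nat.Partition.boundedEquivMultisets n 3 N), card_boundedMultisets_three]

theorem card_boxTriples_filter_fst_eq_zero {n N : ℕ} (h : N ≤ n) :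
    #((boxTriples n N).filter (·.1 = 0)) = N + 1 - (n + 1) / 2 := by
  have : (boxTriples n N).filter (·.1 = 0) =
      (Icc ((n + 1) / 2) N).image fun z => (0, n - z, z) := by
    ext ⟨x, y, z⟩
    simp only [mem_filter, mem_boxTriples, mem_image, mem_Icc, Prod.mk.injEq]
    constructor
    · rintro ⟨⟨-, hyz, hz, hsum⟩, rfl⟩
      exact ⟨z, by omega⟩
    · rintro ⟨z, hz, rfl, rfl, rfl⟩
      omega
  rw [this, card_image_of_injective _ fun _ _ h => congrArg (·.2.2) h, Nat.card_Icc]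

theorem card_boxTriples_filter_snd_snd_eq {n N : ℕ} (h : n ≤ 2 * N) :
    #((boxTriples n N).filter fun t => t.1 ≠ 0 ∧ t.2.2 = N) = (n - N) / 2 := by
  have : (boxTriples n N).filter (fun t => t.1 ≠ 0 ∧ t.2.2 = N) =
      (Ico ((n - N + 1) / 2) (n - N)).image fun y => (n - N - y, y, N) := by
    ext ⟨x, y, z⟩
    simp only [mem_filter, mem_boxTriples, mem_image, mem_Ico, Prod.mk.injEq]
    constructor
    · rintro ⟨⟨hxy, -, -, hsum⟩, hx, rfl⟩
      exact ⟨y, by omega⟩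
    · rintro ⟨y, hy, rfl, rfl, rfl⟩
      omega
  rw [this, card_image_of_injective _ fun _ _ h => congrArg (·.2.1) h, Nat.card_Ico]
  omega

theorem card_boxTriples_filter_interior (n N : ℕ) :
    #((boxTriples (n + 3) (N + 2)).filter fun t => t.1 ≠ 0 ∧ t.2.2 ≠ N + 2) =
      #(boxTriples n N) := by
  refine card_nbij' (fun t => (t.1 - 1, t.2.1 - 1, t.2.2 - 1))
    (fun t => (t.1 + 1, t.2.1 + 1, t.2.2 + 1)) ?_ ?_ ?_ ?_ <;>
  rintro ⟨x, y, z⟩ <;>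
  simp only [coe_filter, Set.mem_ofPred_eq, SetLike.mem_coe, mem_boxTriples, Prod.mk.injEq] <;>
  omega

theorem card_boxTriples_add_three {n N : ℕ} (h₁ : N ≤ n + 1) (h₂ : n ≤ 2 * N + 1) :
    #(boxTriples (n + 3) (N + 2)) =
      #(boxTriples n N) + (N + 3 - (n + 4) / 2) + (n + 1 - N) / 2 := by
  have hsplit := card_filter_add_card_filter_not (s := boxTriples (n + 3) (N + 2)) (·.1 = 0)
  have hsplit' := card_filter_add_card_filter_not
    (s := (boxTriples (n + 3) (N + 2)).filter fun t => ¬t.1 = 0) (·.2.2 = N + 2)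
  rw [filter_filter, filter_filter, card_boxTriples_filter_interior,
    card_boxTriples_filter_snd_snd_eq (by omega)] at hsplit'
  rw [card_boxTriples_filter_fst_eq_zero (by omega)] at hsplit
  omega

theorem card_boxTriples_central {N : ℕ} (hN : 0 < N) :
    #(boxTriples (3 * N / 2) N) =
      #(boxTriples (3 * N / 2 - 1) N) + if N % 4 = 0 then 1 else 0 := by
  induction N using Nat.strong_induction_on with
  | _ N ih =>
    match N, hN with
    | 1, _ | 2, _ => decide
    | N + 3, _ =>
      have hm : 3 * (N + 3) / 2 = 3 * (N + 1) / 2 + 3 := by omega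
      have hm' : 3 * (N + 3) / 2 - 1 = (3 * (N + 1) / 2 - 1) + 3 := by omega
      rw [hm', hm, card_boxTriples_add_three (by omega) (by omega),
        card_boxTriples_add_three (by omega) (by omega), ih (N + 1) (by omega) (by omega)]
      split_ifs <;> omega

theorem stmt10 (N : ℕ) :
    (pBdd ((3 * N / 2 : ℕ) : ℤ) 3 N : ℤ) - pBdd (((3 * N / 2 : ℕ) : ℤ) - 1) 3 N =
      if N % 4 = 0 then 1 else 0 := by
  rcases N.eq_zero_or_pos with rfl | hN
  · have hneg : pBdd (((3 * 0 / 2 : ℕ) : ℤ) - 1) 3 0 = 0 := if_neg (by norm_num)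
    rw [hneg, pBdd_three_eq_card_boxTriples]
    decide
  · have hcast : ((3 * N / 2 : ℕ) : ℤ) - 1 = ((3 * N / 2 - 1 : ℕ) : ℤ) := by omega
    rw [hcast, pBdd_three_eq_card_boxTriples, pBdd_three_eq_card_boxTriples,
      card_boxTriples_central hN]
    split_ifs <;> simp
end

section
/- For all nonnegative integers N and a, p(2N - 2a, 4, N) - p(2N - 2a - 1, 4, N) = p(N - a, 3) - p(N - 2a - 1, 3). -/
namespace Stmt13Aux

open Multiset

/-- The set of partitions of `n` fitting inside an `m × N` box. -/
abbrev Box (n m N : ℕ) :=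
  {π : Nat.Partition n // Multiset.card π.parts ≤ m ∧ ∀ i ∈ π.parts, i ≤ N}

lemma pBdd_natCast (n m N : ℕ) : pBdd (n : ℤ) m N = Nat.card (Box n m N) := by
  simp [pBdd, Box]

lemma pBdd_neg {n : ℤ} (hn : n < 0) (m N : ℕ) : pBdd n m N = 0 := by
  simp [pBdd, not_le.mpr hn]

lemma pAtMost_neg {n : ℤ} (hn : n < 0) (m : ℕ) : pAtMost n m = 0 := by
  simp [pAtMost, not_le.mpr hn]

lemma card_split {α : Type*} [Finite α] (Q p : α → Prop) :
    Nat.card {x // Q x} = Nat.card {x // Q x ∧ p x} + Nat.card {x // Q x ∧ ¬ p x} := by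
  classical
  rw [← Nat.card_congr (Equiv.subtypeSubtypeEquivSubtypeInter Q p),
    ← Nat.card_congr (Equiv.subtypeSubtypeEquivSubtypeInter Q (fun x => ¬ p x)),
    ← Nat.card_sum]
  exact Nat.card_congr (Equiv.sumCompl fun y : {x // Q x} => p y.1).symm

lemma card_top (k m N : ℕ) :
    Nat.card {π : Nat.Partition (k + (N + 1)) //
        (Multiset.card π.parts ≤ m + 1 ∧ ∀ i ∈ π.parts, i ≤ N + 1) ∧ (N + 1) ∈ π.parts}
      = Nat.card (Box k m (N + 1)) := by
  apply Nat.card_congr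
  refine
    { toFun := fun π => ⟨⟨π.1.parts.erase (N+1),
        fun hi => π.1.parts_pos (Multiset.mem_of_mem_erase hi), ?_⟩, ?_, ?_⟩
      invFun := fun μ => ⟨⟨(N+1) ::ₘ μ.1.parts, ?_, ?_⟩, ⟨?_, ?_⟩, ?_⟩
      left_inv := ?_
      right_inv := ?_ }
  · have h := Multiset.cons_erase π.2.2
    have hs := π.1.parts_sum
    rw [← h, Multiset.sum_cons] at hs
    omega
  · show Multiset.card (π.1.parts.erase (N+1)) ≤ m
    have h := Multiset.card_erase_of_mem π.2.2
    rw [Nat.pred_eq_sub_one] at h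
    have := π.2.1.1
    omega
  · intro i hi
    exact π.2.1.2 i (Multiset.mem_of_mem_erase hi)
  · intro i hi
    rcases Multiset.mem_cons.mp hi with h | h
    · omega
    · exact μ.1.parts_pos h
  · rw [Multiset.sum_cons, μ.1.parts_sum]; omega
  · show Multiset.card ((N+1) ::ₘ μ.1.parts) ≤ m + 1
    rw [Multiset.card_cons]; have := μ.2.1; omega
  · intro i hi
    rcases Multiset.mem_cons.mp hi with h | h
    · omega
    · exact μ.2.2 i h
  · exact Multiset.mem_cons_self _ _
  · intro π
    apply Subtype.ext; apply Nat.Partition.ext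
    exact Multiset.cons_erase π.2.2
  · intro μ
    apply Subtype.ext; apply Nat.Partition.ext
    exact Multiset.erase_cons_head _ _

lemma card_top_empty (n m N : ℕ) (hn : n < N + 1) :
    Nat.card {π : Nat.Partition n //
        (Multiset.card π.parts ≤ m + 1 ∧ ∀ i ∈ π.parts, i ≤ N + 1) ∧ (N + 1) ∈ π.parts}
      = 0 := by
  have : IsEmpty {π : Nat.Partition n //
      (Multiset.card π.parts ≤ m + 1 ∧ ∀ i ∈ π.parts, i ≤ N + 1) ∧ (N + 1) ∈ π.parts} := by
    refine ⟨fun ⟨π, _, hmem⟩ => ?_⟩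
    have := Multiset.le_sum_of_mem hmem
    rw [π.parts_sum] at this
    omega
  exact Nat.card_of_isEmpty

/-- Recurrence 1: split by whether some part equals `N+1`. -/
lemma rec1 (n : ℤ) (m N : ℕ) :
    pBdd n (m + 1) (N + 1) = pBdd n (m + 1) N + pBdd (n - (N + 1)) m (N + 1) := by
  rcases lt_or_ge n 0 with hn | hn
  · rw [pBdd_neg hn, pBdd_neg hn, pBdd_neg (by omega)]
  · obtain ⟨k, rfl⟩ := Int.eq_ofNat_of_zero_le hn
    rw [pBdd_natCast, pBdd_natCast]
    rw [card_split (fun π : Nat.Partition k =>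
        Multiset.card π.parts ≤ m + 1 ∧ ∀ i ∈ π.parts, i ≤ N + 1)
      (fun π => (N + 1) ∈ π.parts)]
    have h2 : Nat.card {π : Nat.Partition k //
        (Multiset.card π.parts ≤ m + 1 ∧ ∀ i ∈ π.parts, i ≤ N + 1) ∧
          ¬ (N + 1) ∈ π.parts} = Nat.card (Box k (m + 1) N) := by
      apply Nat.card_congr
      apply Equiv.subtypeEquivRight
      intro π
      constructor
      · rintro ⟨⟨h1, h2⟩, h3⟩
        refine ⟨h1, fun i hi => ?_⟩
        have := h2 i hi
        rcases Nat.lt_or_ge i (N + 1) with h | h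
        · omega
        · exact absurd (show (N+1) ∈ π.parts from by rwa [show N + 1 = i by omega]) h3
      · rintro ⟨h1, h2⟩
        refine ⟨⟨h1, fun i hi => le_trans (h2 i hi) (by omega)⟩, fun hmem => ?_⟩
        have := h2 _ hmem
        omega
    rcases Nat.lt_or_ge k (N + 1) with hk | hk
    · rw [card_top_empty k m N hk, h2, pBdd_neg (by omega : (k : ℤ) - (N + 1) < 0)]
      omega
    · obtain ⟨k', rfl⟩ : ∃ k', k = k' + (N + 1) := ⟨k - (N + 1), by omega⟩
      rw [card_top k' m N, h2,
        show ((k' + (N + 1) : ℕ) : ℤ) - (N + 1) = (k' : ℤ) by push_cast; ring,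
        pBdd_natCast]
      ring

lemma multiset_strip (s : Multiset ℕ) (hpos : ∀ i ∈ s, 0 < i) :
    Multiset.replicate
        (Multiset.card s - Multiset.card ((s.map (· - 1)).filter (· ≠ 0))) 1
      + ((s.map (· - 1)).filter (· ≠ 0)).map (· + 1) = s := by
  induction s using Multiset.induction_on with
  | empty => simp
  | cons a t ih =>
    have ha : 0 < a := hpos a (Multiset.mem_cons_self a t)
    have iht := ih (fun i hi => hpos i (Multiset.mem_cons_of_mem hi))
    have hle : Multiset.card ((t.map (· - 1)).filter (· ≠ 0)) ≤ Multiset.card t := by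
      calc Multiset.card ((t.map (· - 1)).filter (· ≠ 0))
          ≤ Multiset.card (t.map (· - 1)) := Multiset.card_le_card (Multiset.filter_le _ _)
        _ = Multiset.card t := Multiset.card_map _ _
    rw [Multiset.map_cons]
    rcases Nat.lt_or_ge a 2 with h2 | h2
    · have ha1 : a = 1 := by omega
      subst ha1
      rw [show (1:ℕ) - 1 = 0 from rfl, Multiset.filter_cons_of_neg _ (by simp)]
      rw [Multiset.card_cons]
      rw [show Multiset.card t + 1 - Multiset.card ((t.map (· - 1)).filter (· ≠ 0))
          = (Multiset.card t - Multiset.card ((t.map (· - 1)).filter (· ≠ 0))) + 1 by omega]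
      rw [Multiset.replicate_succ, Multiset.cons_add, iht]
    · rw [Multiset.filter_cons_of_pos _ (by simp; omega), Multiset.map_cons,
        show a - 1 + 1 = a by omega, Multiset.card_cons, Multiset.card_cons]
      rw [show Multiset.card t + 1 - (Multiset.card ((t.map (· - 1)).filter (· ≠ 0)) + 1)
          = Multiset.card t - Multiset.card ((t.map (· - 1)).filter (· ≠ 0)) by omega]
      rw [Multiset.add_cons, iht]

lemma multiset_unstrip (s : Multiset ℕ) (hpos : ∀ i ∈ s, 0 < i) (j : ℕ) :
    (((Multiset.replicate j 1 + s.map (· + 1)).map (· - 1)).filter (· ≠ 0)) = s := by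
  rw [Multiset.map_add, Multiset.map_replicate, Multiset.filter_add]
  simp only [Multiset.map_map, Function.comp]
  rw [show (1:ℕ) - 1 = 0 from rfl]
  rw [Multiset.filter_eq_nil.mpr
    (by intro a ha; simp at ha ⊢; exact (Multiset.eq_of_mem_replicate ha).symm ▸ rfl)]
  rw [zero_add]
  rw [show ((fun x => x + 1 - 1) : ℕ → ℕ) = id by funext x; simp, Multiset.map_id]
  rw [Multiset.filter_eq_self]
  intro a ha
  have := hpos a ha
  omega

lemma sum_map_pred (s : Multiset ℕ) (hpos : ∀ i ∈ s, 0 < i) :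
    (s.map (· - 1)).sum = s.sum - Multiset.card s := by
  induction s using Multiset.induction_on with
  | empty => simp
  | cons a t ih =>
    have ha : 0 < a := hpos a (Multiset.mem_cons_self a t)
    have hct : Multiset.card t ≤ t.sum := by
      have h1 : ∀ x ∈ t, 1 ≤ x := fun i hi => hpos i (Multiset.mem_cons_of_mem hi)
      simpa using Multiset.card_nsmul_le_sum h1
    rw [Multiset.map_cons, Multiset.sum_cons, Multiset.sum_cons, Multiset.card_cons,
      ih (fun i hi => hpos i (Multiset.mem_cons_of_mem hi))]
    omega

lemma sum_map_succ (s : Multiset ℕ) : (s.map (· + 1)).sum = s.sum + Multiset.card s := by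
  induction s using Multiset.induction_on with
  | empty => simp
  | cons a t ih => simp [ih]; omega

lemma card_col (k m N : ℕ) :
    Nat.card {π : Nat.Partition (k + (m + 1)) //
        (Multiset.card π.parts ≤ m + 1 ∧ ∀ i ∈ π.parts, i ≤ N + 1) ∧
          Multiset.card π.parts = m + 1}
      = Nat.card (Box k (m + 1) N) := by
  apply Nat.card_congr
  refine
    { toFun := fun π => ⟨Nat.Partition.ofSums k (π.1.parts.map (· - 1)) ?_, ?_, ?_⟩
      invFun := fun μ => ⟨⟨Multiset.replicate (m + 1 - Multiset.card μ.1.parts) 1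
          + μ.1.parts.map (· + 1), ?_, ?_⟩, ⟨?_, ?_⟩, ?_⟩
      left_inv := ?_
      right_inv := ?_ }
  · rw [sum_map_pred _ (fun i hi => π.1.parts_pos hi), π.1.parts_sum, π.2.2]
    omega
  · show Multiset.card ((π.1.parts.map (· - 1)).filter (· ≠ 0)) ≤ m + 1
    calc Multiset.card ((π.1.parts.map (· - 1)).filter (· ≠ 0))
        ≤ Multiset.card (π.1.parts.map (· - 1)) :=
          Multiset.card_le_card (Multiset.filter_le _ _)
      _ = Multiset.card π.1.parts := Multiset.card_map _ _
      _ ≤ m + 1 := π.2.1.1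
  · intro i hi
    have hi' := Multiset.mem_of_mem_filter hi
    obtain ⟨j, hj, rfl⟩ := Multiset.mem_map.mp hi'
    have := π.2.1.2 j hj
    omega
  · intro i hi
    rcases Multiset.mem_add.mp hi with h | h
    · have := Multiset.eq_of_mem_replicate h; omega
    · obtain ⟨j, hj, rfl⟩ := Multiset.mem_map.mp h; omega
  · rw [Multiset.sum_add, Multiset.sum_replicate, sum_map_succ, μ.1.parts_sum]
    have := μ.2.1
    simp only [smul_eq_mul, mul_one]
    omega
  · show Multiset.card (Multiset.replicate (m + 1 - Multiset.card μ.1.parts) 1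
        + μ.1.parts.map (· + 1)) ≤ m + 1
    rw [Multiset.card_add, Multiset.card_replicate, Multiset.card_map]
    have := μ.2.1
    omega
  · intro i hi
    rcases Multiset.mem_add.mp hi with h | h
    · have := Multiset.eq_of_mem_replicate h; omega
    · obtain ⟨j, hj, rfl⟩ := Multiset.mem_map.mp h
      have := μ.2.2 j hj
      omega
  · show Multiset.card (Multiset.replicate (m + 1 - Multiset.card μ.1.parts) 1
        + μ.1.parts.map (· + 1)) = m + 1
    rw [Multiset.card_add, Multiset.card_replicate, Multiset.card_map]
    have := μ.2.1
    omega
  · intro π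
    apply Subtype.ext; apply Nat.Partition.ext
    show Multiset.replicate
        (m + 1 - Multiset.card ((π.1.parts.map (· - 1)).filter (· ≠ 0))) 1
      + ((π.1.parts.map (· - 1)).filter (· ≠ 0)).map (· + 1) = π.1.parts
    rw [show m + 1 - Multiset.card ((π.1.parts.map (· - 1)).filter (· ≠ 0))
        = Multiset.card π.1.parts
          - Multiset.card ((π.1.parts.map (· - 1)).filter (· ≠ 0)) from by rw [π.2.2]]
    exact multiset_strip π.1.parts (fun i hi => π.1.parts_pos hi)
  · intro μ
    apply Subtype.ext; apply Nat.Partition.ext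
    show (((Multiset.replicate (m + 1 - Multiset.card μ.1.parts) 1
        + μ.1.parts.map (· + 1)).map (· - 1)).filter (· ≠ 0)) = μ.1.parts
    exact multiset_unstrip μ.1.parts (fun i hi => μ.1.parts_pos hi) _

lemma card_col_empty (n m N : ℕ) (hn : n < m + 1) :
    Nat.card {π : Nat.Partition n //
        (Multiset.card π.parts ≤ m + 1 ∧ ∀ i ∈ π.parts, i ≤ N + 1) ∧
          Multiset.card π.parts = m + 1}
      = 0 := by
  have : IsEmpty {π : Nat.Partition n //
      (Multiset.card π.parts ≤ m + 1 ∧ ∀ i ∈ π.parts, i ≤ N + 1) ∧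
        Multiset.card π.parts = m + 1} := by
    refine ⟨fun ⟨π, _, hc⟩ => ?_⟩
    have h1 : ∀ x ∈ π.parts, 1 ≤ x := fun i hi => π.parts_pos hi
    have h2 : Multiset.card π.parts ≤ π.parts.sum := by
      simpa using Multiset.card_nsmul_le_sum h1
    rw [π.parts_sum] at h2
    omega
  exact Nat.card_of_isEmpty

/-- Recurrence 2: split by whether the number of parts is exactly `m+1`. -/
lemma rec2 (n : ℤ) (m N : ℕ) :
    pBdd n (m + 1) (N + 1) = pBdd n m (N + 1) + pBdd (n - (m + 1)) (m + 1) N := by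
  rcases lt_or_ge n 0 with hn | hn
  · rw [pBdd_neg hn, pBdd_neg hn, pBdd_neg (by omega)]
  · obtain ⟨k, rfl⟩ := Int.eq_ofNat_of_zero_le hn
    rw [pBdd_natCast, pBdd_natCast]
    rw [card_split (fun π : Nat.Partition k =>
        Multiset.card π.parts ≤ m + 1 ∧ ∀ i ∈ π.parts, i ≤ N + 1)
      (fun π => Multiset.card π.parts = m + 1)]
    have h2 : Nat.card {π : Nat.Partition k //
        (Multiset.card π.parts ≤ m + 1 ∧ ∀ i ∈ π.parts, i ≤ N + 1) ∧
          ¬ Multiset.card π.parts = m + 1} = Nat.card (Box k m (N + 1)) := by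
      apply Nat.card_congr
      apply Equiv.subtypeEquivRight
      intro π
      constructor
      · rintro ⟨⟨h1, h2⟩, h3⟩
        exact ⟨by omega, h2⟩
      · rintro ⟨h1, h2⟩
        exact ⟨⟨by omega, h2⟩, by omega⟩
    rcases Nat.lt_or_ge k (m + 1) with hk | hk
    · rw [card_col_empty k m N hk, h2, pBdd_neg (by omega : (k : ℤ) - (m + 1) < 0)]
      omega
    · obtain ⟨k', rfl⟩ : ∃ k', k = k' + (m + 1) := ⟨k - (m + 1), by omega⟩
      rw [card_col k' m N, h2,
        show ((k' + (m + 1) : ℕ) : ℤ) - (m + 1) = (k' : ℤ) by push_cast; ring,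
        pBdd_natCast]
      ring

lemma pBdd_zero_arg (m N : ℕ) : pBdd 0 m N = 1 := by
  rw [show (0 : ℤ) = ((0 : ℕ) : ℤ) from rfl, pBdd_natCast]
  have : Unique (Box 0 m N) := by
    refine ⟨⟨⟨default, by simp, by simp⟩⟩, ?_⟩
    intro x
    apply Subtype.ext
    apply Subsingleton.elim
  exact Nat.card_unique

lemma pAtMost_zero_arg (m : ℕ) : pAtMost 0 m = 1 := by
  rw [pAtMost, if_pos le_rfl]
  simp only [Int.toNat_zero]
  have : Unique {π : Nat.Partition 0 // Multiset.card π.parts ≤ m} := by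
    refine ⟨⟨⟨default, by simp⟩⟩, ?_⟩
    intro x
    apply Subtype.ext
    apply Subsingleton.elim
  exact Nat.card_unique

lemma pBdd_m_zero (n : ℤ) (N : ℕ) : pBdd n 0 N = if n = 0 then 1 else 0 := by
  rcases lt_trichotomy n 0 with hn | hn | hn
  · rw [pBdd_neg hn, if_neg (by omega)]
  · subst hn; rw [pBdd_zero_arg, if_pos rfl]
  · rw [if_neg (by omega)]
    obtain ⟨k, rfl⟩ := Int.eq_ofNat_of_zero_le hn.le
    rw [pBdd_natCast]
    have : IsEmpty (Box k 0 N) := by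
      refine ⟨fun ⟨π, hc, _⟩ => ?_⟩
      have h0 : π.parts = 0 := Multiset.card_eq_zero.mp (by omega)
      have := π.parts_sum
      rw [h0] at this
      simp at this
      omega
    exact Nat.card_of_isEmpty

lemma pBdd_N_zero (n : ℤ) (m : ℕ) : pBdd n m 0 = if n = 0 then 1 else 0 := by
  rcases lt_trichotomy n 0 with hn | hn | hn
  · rw [pBdd_neg hn, if_neg (by omega)]
  · subst hn; rw [pBdd_zero_arg, if_pos rfl]
  · rw [if_neg (by omega)]
    obtain ⟨k, rfl⟩ := Int.eq_ofNat_of_zero_le hn.le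
    rw [pBdd_natCast]
    have : IsEmpty (Box k m 0) := by
      refine ⟨fun ⟨π, _, hb⟩ => ?_⟩
      have h0 : π.parts = 0 := by
        rw [Multiset.eq_zero_iff_forall_notMem]
        intro i hi
        have := π.parts_pos hi
        have := hb i hi
        omega
      have := π.parts_sum
      rw [h0] at this
      simp at this
      omega
    exact Nat.card_of_isEmpty

/-- Box symmetry (complementation), proved by double induction from the
two recurrences. -/
lemma symm : ∀ (m N : ℕ) (n : ℤ), pBdd n m N = pBdd ((m : ℤ) * N - n) m N := by
  intro m
  induction m with
  | zero =>
    intro N n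
    rw [pBdd_m_zero, pBdd_m_zero]
    simp only [Nat.cast_zero, zero_mul, zero_sub]
    rcases eq_or_ne n 0 with rfl | h
    · simp
    · rw [if_neg h, if_neg (by omega)]
  | succ m ihm =>
    intro N
    induction N with
    | zero =>
      intro n
      rw [pBdd_N_zero, pBdd_N_zero]
      simp only [Nat.cast_zero, mul_zero, zero_sub]
      rcases eq_or_ne n 0 with rfl | h
      · simp
      · rw [if_neg h, if_neg (by omega)]
    | succ N ihN =>
      intro n
      have key1 := rec1 n m N
      have key2 := rec2 ((m : ℤ) * N + m + N + 1 - n) m N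
      have a1 : pBdd ((m : ℤ) * N + m + N + 1 - n) m (N + 1)
          = pBdd (n - ((N : ℤ) + 1)) m (N + 1) := by
        rw [ihm (N + 1) ((m : ℤ) * N + m + N + 1 - n)]
        congr 1
        push_cast
        ring
      have a2 : pBdd ((m : ℤ) * N + m + N + 1 - n - ((m : ℤ) + 1)) (m + 1) N
          = pBdd n (m + 1) N := by
        rw [ihN ((m : ℤ) * N + m + N + 1 - n - ((m : ℤ) + 1))]
        congr 1
        push_cast
        ring
      have e1 : ((m + 1 : ℕ) : ℤ) * ((N + 1 : ℕ) : ℤ) - n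
          = (m : ℤ) * N + m + N + 1 - n := by push_cast; ring
      rw [e1, key2]
      have e2 : (m : ℤ) * N + m + N + 1 - n - ((m : ℤ) + 1)
          = (m : ℤ) * N + m + N + 1 - n - ((m : ℕ) + 1 : ℤ) := by push_cast; ring
      rw [key1, a1]
      rw [show ((m : ℤ) * ↑N + ↑m + ↑N + 1 - n - (↑m + 1)) =
        ((m : ℤ) * N + m + N + 1 - n - ((m : ℤ) + 1)) from by ring] at *
      rw [a2]
      ring

/-- When `n ≤ N`, the bound on parts is inactive. -/
lemma pBdd_eq_pAtMost (n : ℤ) (m N : ℕ) (h : n ≤ N) : pBdd n m N = pAtMost n m := by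
  rcases lt_or_ge n 0 with hn | hn
  · rw [pBdd_neg hn, pAtMost_neg hn]
  · rw [pBdd, if_pos hn, pAtMost, if_pos hn]
    apply Nat.card_congr
    apply Equiv.subtypeEquivRight
    intro π
    constructor
    · rintro ⟨h1, _⟩; exact h1
    · intro h1
      refine ⟨h1, fun i hi => ?_⟩
      have h2 : i ≤ π.parts.sum := Multiset.le_sum_of_mem hi
      rw [π.parts_sum] at h2
      omega

lemma pBdd_congr (m N : ℕ) {x y : ℤ} (h : x = y) : pBdd x m N = pBdd y m N := by rw [h]

lemma pAtMost_congr (m : ℕ) {x y : ℤ} (h : x = y) : pAtMost x m = pAtMost y m := by rw [h]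

lemma main : ∀ N a : ℕ,
    ((pBdd (2 * (N : ℤ) - 2 * a) 4 N : ℤ) - pBdd (2 * (N : ℤ) - 2 * a - 1) 4 N =
      (pAtMost ((N : ℤ) - a) 3 : ℤ) - pAtMost ((N : ℤ) - 2 * a - 1) 3) ∧
    ((pBdd (2 * (N : ℤ) - 2 * a - 1) 4 N : ℤ) - pBdd (2 * (N : ℤ) - 2 * a - 2) 4 N =
      (pAtMost ((N : ℤ) - a - 2) 3 : ℤ) - pAtMost ((N : ℤ) - 2 * a - 2) 3) := by
  intro N
  induction N with
  | zero =>
    intro a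
    constructor
    · rw [pBdd_N_zero, pBdd_N_zero]
      rcases Nat.eq_zero_or_pos a with rfl | ha
      · rw [if_pos (by norm_num), if_neg (by norm_num),
          pAtMost_congr 3 (show ((0:ℕ):ℤ) - ((0:ℕ):ℤ) = 0 by norm_num),
          pAtMost_zero_arg, pAtMost_neg (by norm_num)]
      · rw [if_neg (by push_cast; omega), if_neg (by push_cast; omega),
          pAtMost_neg (by push_cast; omega), pAtMost_neg (by push_cast; omega)]
    · rw [pBdd_N_zero, pBdd_N_zero, if_neg (by push_cast; omega), if_neg (by push_cast; omega),
        pAtMost_neg (by push_cast; omega), pAtMost_neg (by push_cast; omega)]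
  | succ N ih =>
    intro a
    constructor
    · -- even part
      cases a with
      | zero =>
        rw [pBdd_congr 4 (N+1) (show 2 * ((N+1:ℕ):ℤ) - 2 * ((0:ℕ):ℤ)
              = 2 * (N:ℤ) + 2 by push_cast; ring),
          pBdd_congr 4 (N+1) (show 2 * ((N+1:ℕ):ℤ) - 2 * ((0:ℕ):ℤ) - 1
              = 2 * (N:ℤ) + 1 by push_cast; ring),
          pAtMost_congr 3 (show ((N+1:ℕ):ℤ) - ((0:ℕ):ℤ) = (N:ℤ) + 1 by push_cast; ring),
          pAtMost_congr 3 (show ((N+1:ℕ):ℤ) - 2 * ((0:ℕ):ℤ) - 1 = (N:ℤ) by push_cast; ring)]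
        have r1 : pBdd (2 * (N:ℤ) + 2) 4 (N+1)
            = pBdd (2 * (N:ℤ) + 2) 4 N + pBdd (2 * (N:ℤ) + 2 - ((N:ℤ) + 1)) 3 (N+1) :=
          rec1 _ 3 N
        have r2 : pBdd (2 * (N:ℤ) + 1) 4 (N+1)
            = pBdd (2 * (N:ℤ) + 1) 4 N + pBdd (2 * (N:ℤ) + 1 - ((N:ℤ) + 1)) 3 (N+1) :=
          rec1 _ 3 N
        have s1 : pBdd (2 * (N:ℤ) + 2) 4 N = pBdd (2 * (N:ℤ) - 2 * ((0:ℕ):ℤ) - 2) 4 N := by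
          rw [symm 4 N (2 * (N:ℤ) + 2)]
          exact pBdd_congr 4 N (by push_cast; ring)
        have s2 : pBdd (2 * (N:ℤ) + 1) 4 N = pBdd (2 * (N:ℤ) - 2 * ((0:ℕ):ℤ) - 1) 4 N := by
          rw [symm 4 N (2 * (N:ℤ) + 1)]
          exact pBdd_congr 4 N (by push_cast; ring)
        have t1 : pBdd (2 * (N:ℤ) + 2 - ((N:ℤ) + 1)) 3 (N+1) = pAtMost ((N:ℤ) + 1) 3 := by
          rw [pBdd_congr 3 (N+1) (show 2 * (N:ℤ) + 2 - ((N:ℤ) + 1) = (N:ℤ) + 1 by ring)]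
          exact pBdd_eq_pAtMost _ 3 (N+1) (by push_cast; omega)
        have t2 : pBdd (2 * (N:ℤ) + 1 - ((N:ℤ) + 1)) 3 (N+1) = pAtMost ((N:ℤ)) 3 := by
          rw [pBdd_congr 3 (N+1) (show 2 * (N:ℤ) + 1 - ((N:ℤ) + 1) = (N:ℤ) by ring)]
          exact pBdd_eq_pAtMost _ 3 (N+1) (by push_cast; omega)
        have hodd := (ih 0).2
        have hodd' : (pBdd (2 * (N:ℤ) - 2 * ((0:ℕ):ℤ) - 1) 4 N : ℤ)
            - (pBdd (2 * (N:ℤ) - 2 * ((0:ℕ):ℤ) - 2) 4 N : ℤ) = 0 := by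
          rw [hodd, pAtMost_congr 3 (show (N:ℤ) - ((0:ℕ):ℤ) - 2
            = (N:ℤ) - 2 * ((0:ℕ):ℤ) - 2 by push_cast; ring)]
          ring
        zify at r1 r2 s1 s2 t1 t2 hodd'
        linarith [hodd']
      | succ b =>
        rw [pBdd_congr 4 (N+1) (show 2 * ((N+1:ℕ):ℤ) - 2 * ((b+1:ℕ):ℤ)
              = 2 * (N:ℤ) - 2 * (b:ℤ) by push_cast; ring),
          pBdd_congr 4 (N+1) (show 2 * ((N+1:ℕ):ℤ) - 2 * ((b+1:ℕ):ℤ) - 1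
              = 2 * (N:ℤ) - 2 * (b:ℤ) - 1 by push_cast; ring),
          pAtMost_congr 3 (show ((N+1:ℕ):ℤ) - ((b+1:ℕ):ℤ) = (N:ℤ) - (b:ℤ) by push_cast; ring),
          pAtMost_congr 3 (show ((N+1:ℕ):ℤ) - 2 * ((b+1:ℕ):ℤ) - 1
              = (N:ℤ) - 2 * (b:ℤ) - 2 by push_cast; ring)]
        have r1 : pBdd (2 * (N:ℤ) - 2 * (b:ℤ)) 4 (N+1)
            = pBdd (2 * (N:ℤ) - 2 * (b:ℤ)) 4 N
              + pBdd (2 * (N:ℤ) - 2 * (b:ℤ) - ((N:ℤ) + 1)) 3 (N+1) := rec1 _ 3 N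
        have r2 : pBdd (2 * (N:ℤ) - 2 * (b:ℤ) - 1) 4 (N+1)
            = pBdd (2 * (N:ℤ) - 2 * (b:ℤ) - 1) 4 N
              + pBdd (2 * (N:ℤ) - 2 * (b:ℤ) - 1 - ((N:ℤ) + 1)) 3 (N+1) := rec1 _ 3 N
        have t1 : pBdd (2 * (N:ℤ) - 2 * (b:ℤ) - ((N:ℤ) + 1)) 3 (N+1)
            = pAtMost ((N:ℤ) - 2 * (b:ℤ) - 1) 3 := by
          rw [pBdd_congr 3 (N+1) (show 2 * (N:ℤ) - 2 * (b:ℤ) - ((N:ℤ) + 1)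
              = (N:ℤ) - 2 * (b:ℤ) - 1 by ring)]
          exact pBdd_eq_pAtMost _ 3 (N+1) (by push_cast; omega)
        have t2 : pBdd (2 * (N:ℤ) - 2 * (b:ℤ) - 1 - ((N:ℤ) + 1)) 3 (N+1)
            = pAtMost ((N:ℤ) - 2 * (b:ℤ) - 2) 3 := by
          rw [pBdd_congr 3 (N+1) (show 2 * (N:ℤ) - 2 * (b:ℤ) - 1 - ((N:ℤ) + 1)
              = (N:ℤ) - 2 * (b:ℤ) - 2 by ring)]
          exact pBdd_eq_pAtMost _ 3 (N+1) (by push_cast; omega)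
        have heven := (ih b).1
        zify at r1 r2 t1 t2 heven
        linarith
    · -- odd part
      cases a with
      | zero =>
        rw [pBdd_congr 4 (N+1) (show 2 * ((N+1:ℕ):ℤ) - 2 * ((0:ℕ):ℤ) - 1
              = 2 * (N:ℤ) + 1 by push_cast; ring),
          pBdd_congr 4 (N+1) (show 2 * ((N+1:ℕ):ℤ) - 2 * ((0:ℕ):ℤ) - 2
              = 2 * (N:ℤ) by push_cast; ring),
          pAtMost_congr 3 (show ((N+1:ℕ):ℤ) - ((0:ℕ):ℤ) - 2 = (N:ℤ) - 1 by push_cast; ring),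
          pAtMost_congr 3 (show ((N+1:ℕ):ℤ) - 2 * ((0:ℕ):ℤ) - 2 = (N:ℤ) - 1 by push_cast; ring)]
        have r1 : pBdd (2 * (N:ℤ) + 1) 4 (N+1)
            = pBdd (2 * (N:ℤ) + 1) 4 N + pBdd (2 * (N:ℤ) + 1 - ((N:ℤ) + 1)) 3 (N+1) :=
          rec1 _ 3 N
        have r2 : pBdd (2 * (N:ℤ)) 4 (N+1)
            = pBdd (2 * (N:ℤ)) 4 N + pBdd (2 * (N:ℤ) - ((N:ℤ) + 1)) 3 (N+1) := rec1 _ 3 N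
        have s1 : pBdd (2 * (N:ℤ) + 1) 4 N = pBdd (2 * (N:ℤ) - 2 * ((0:ℕ):ℤ) - 1) 4 N := by
          rw [symm 4 N (2 * (N:ℤ) + 1)]
          exact pBdd_congr 4 N (by push_cast; ring)
        have s2 : pBdd (2 * (N:ℤ)) 4 N = pBdd (2 * (N:ℤ) - 2 * ((0:ℕ):ℤ)) 4 N :=
          pBdd_congr 4 N (by push_cast; ring)
        have t1 : pBdd (2 * (N:ℤ) + 1 - ((N:ℤ) + 1)) 3 (N+1) = pAtMost ((N:ℤ)) 3 := by
          rw [pBdd_congr 3 (N+1) (show 2 * (N:ℤ) + 1 - ((N:ℤ) + 1) = (N:ℤ) by ring)]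
          exact pBdd_eq_pAtMost _ 3 (N+1) (by push_cast; omega)
        have t2 : pBdd (2 * (N:ℤ) - ((N:ℤ) + 1)) 3 (N+1) = pAtMost ((N:ℤ) - 1) 3 := by
          rw [pBdd_congr 3 (N+1) (show 2 * (N:ℤ) - ((N:ℤ) + 1) = (N:ℤ) - 1 by ring)]
          exact pBdd_eq_pAtMost _ 3 (N+1) (by push_cast; omega)
        have heven := (ih 0).1
        have he1 : pAtMost ((N:ℤ) - ((0:ℕ):ℤ)) 3 = pAtMost ((N:ℤ)) 3 :=
          pAtMost_congr 3 (by push_cast; ring)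
        have he2 : pAtMost ((N:ℤ) - 2 * ((0:ℕ):ℤ) - 1) 3 = pAtMost ((N:ℤ) - 1) 3 :=
          pAtMost_congr 3 (by push_cast; ring)
        rw [he1, he2] at heven
        zify at r1 r2 s1 s2 t1 t2 heven
        linarith
      | succ b =>
        rw [pBdd_congr 4 (N+1) (show 2 * ((N+1:ℕ):ℤ) - 2 * ((b+1:ℕ):ℤ) - 1
              = 2 * (N:ℤ) - 2 * (b:ℤ) - 1 by push_cast; ring),
          pBdd_congr 4 (N+1) (show 2 * ((N+1:ℕ):ℤ) - 2 * ((b+1:ℕ):ℤ) - 2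
              = 2 * (N:ℤ) - 2 * (b:ℤ) - 2 by push_cast; ring),
          pAtMost_congr 3 (show ((N+1:ℕ):ℤ) - ((b+1:ℕ):ℤ) - 2
              = (N:ℤ) - (b:ℤ) - 2 by push_cast; ring),
          pAtMost_congr 3 (show ((N+1:ℕ):ℤ) - 2 * ((b+1:ℕ):ℤ) - 2
              = (N:ℤ) - 2 * (b:ℤ) - 3 by push_cast; ring)]
        have r1 : pBdd (2 * (N:ℤ) - 2 * (b:ℤ) - 1) 4 (N+1)
            = pBdd (2 * (N:ℤ) - 2 * (b:ℤ) - 1) 4 N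
              + pBdd (2 * (N:ℤ) - 2 * (b:ℤ) - 1 - ((N:ℤ) + 1)) 3 (N+1) := rec1 _ 3 N
        have r2 : pBdd (2 * (N:ℤ) - 2 * (b:ℤ) - 2) 4 (N+1)
            = pBdd (2 * (N:ℤ) - 2 * (b:ℤ) - 2) 4 N
              + pBdd (2 * (N:ℤ) - 2 * (b:ℤ) - 2 - ((N:ℤ) + 1)) 3 (N+1) := rec1 _ 3 N
        have t1 : pBdd (2 * (N:ℤ) - 2 * (b:ℤ) - 1 - ((N:ℤ) + 1)) 3 (N+1)
            = pAtMost ((N:ℤ) - 2 * (b:ℤ) - 2) 3 := by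
          rw [pBdd_congr 3 (N+1) (show 2 * (N:ℤ) - 2 * (b:ℤ) - 1 - ((N:ℤ) + 1)
              = (N:ℤ) - 2 * (b:ℤ) - 2 by ring)]
          exact pBdd_eq_pAtMost _ 3 (N+1) (by push_cast; omega)
        have t2 : pBdd (2 * (N:ℤ) - 2 * (b:ℤ) - 2 - ((N:ℤ) + 1)) 3 (N+1)
            = pAtMost ((N:ℤ) - 2 * (b:ℤ) - 3) 3 := by
          rw [pBdd_congr 3 (N+1) (show 2 * (N:ℤ) - 2 * (b:ℤ) - 2 - ((N:ℤ) + 1)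
              = (N:ℤ) - 2 * (b:ℤ) - 3 by ring)]
          exact pBdd_eq_pAtMost _ 3 (N+1) (by push_cast; omega)
        have hodd := (ih b).2
        zify at r1 r2 t1 t2 hodd
        linarith

end Stmt13Aux

theorem stmt13 (N a : ℕ) :
    (pBdd (2 * (N : ℤ) - 2 * a) 4 N : ℤ) - pBdd (2 * (N : ℤ) - 2 * a - 1) 4 N =
      (pAtMost ((N : ℤ) - a) 3 : ℤ) - pAtMost ((N : ℤ) - 2 * a - 1) 3 :=
  (Stmt13Aux.main N a).1
end

section
/- For every nonnegative integer N ≥ 1, p(2N - 1, 4, N) = p(2N - 2, 4, N); that is, the two coefficients immediately left of the central coefficient of [N+4 choose 4]_q are always equal. -/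
open Multiset

def MS (m N n : ℕ) : Type :=
  {s : Multiset ℕ // Multiset.card s = m ∧ (∀ x ∈ s, x ≤ N) ∧ s.sum = n}

noncomputable def msEquivSym (m N n : ℕ) :
    {x : Sym (Fin (N + 1)) m // (x.1.map Fin.val).sum = n} ≃ MS m N n := by
  apply Equiv.ofBijective
    (fun x => ⟨x.1.1.map Fin.val, by
      refine ⟨by simp [x.1.2], fun y hy => ?_, x.2⟩
      simp only [Multiset.mem_map] at hy
      obtain ⟨i, _, rfl⟩ := hy
      omega⟩)
  constructor
  · intro x y h
    have h' : (x.1.1.map Fin.val) = (y.1.1.map Fin.val) := congrArg Subtype.val h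
    have := Multiset.map_injective (Fin.val_injective) h'
    exact Subtype.ext (Sym.coe_injective this)
  · rintro ⟨s, hc, hb, hs⟩
    set t : Multiset (Fin (N+1)) :=
      s.attach.map (fun x => (⟨x.1, by have := hb x.1 x.2; omega⟩ : Fin (N+1))) with ht
    have key : t.map Fin.val = s := by
      rw [ht, Multiset.map_map]
      exact Multiset.attach_map_val s
    refine ⟨⟨⟨t, by simp [ht, hc]⟩, by simpa [key] using hs⟩, Subtype.ext key⟩

noncomputable instance (m N n : ℕ) : Fintype (MS m N n) :=
  Fintype.ofEquiv _ (msEquivSym m N n)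

lemma msCard (m N n : ℕ) :
    Nat.card (MS m N n) =
      Fintype.card {x : Sym (Fin (N + 1)) m // (x.1.map Fin.val).sum = n} := by
  rw [Nat.card_eq_fintype_card]
  exact (Fintype.card_congr (msEquivSym m N n)).symm

/-- Padding with zeros: partitions of `k` with at most `m` parts each `≤ N`
are in bijection with `MS m N k`. -/
def partEquiv (m N k : ℕ) :
    {π : Nat.Partition k // Multiset.card π.parts ≤ m ∧ ∀ i ∈ π.parts, i ≤ N} ≃ MS m N k where
  toFun π := ⟨π.1.parts + Multiset.replicate (m - Multiset.card π.1.parts) 0, by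
    refine ⟨by rw [Multiset.card_add, Multiset.card_replicate]; omega, fun x hx => ?_, by simp [π.1.parts_sum]⟩
    rcases Multiset.mem_add.1 hx with h | h
    · exact π.2.2 x h
    · simp [Multiset.eq_of_mem_replicate h]⟩
  invFun s := ⟨Nat.Partition.ofSums k s.1 s.2.2.2, by
    constructor
    · calc Multiset.card (s.1.filter (· ≠ 0)) ≤ Multiset.card s.1 := Multiset.card_le_card (Multiset.filter_le _ _)
        _ = m := s.2.1
    · intro i hi
      exact s.2.2.1 i (Multiset.mem_of_mem_filter hi)⟩
  left_inv := by
    rintro ⟨π, h1, h2⟩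
    apply Subtype.ext
    apply Nat.Partition.ext
    show (π.parts + Multiset.replicate _ 0).filter (· ≠ 0) = π.parts
    rw [Multiset.filter_add]
    have h3 : π.parts.filter (· ≠ 0) = π.parts :=
      Multiset.filter_eq_self.2 fun x hx => (π.parts_pos hx).ne'
    rw [h3]
    have h4 : (Multiset.replicate (m - Multiset.card π.parts) 0).filter (· ≠ 0) = 0 := by
      rw [Multiset.filter_eq_nil]
      intro a ha
      simp [Multiset.eq_of_mem_replicate ha]
    rw [h4, add_zero]
  right_inv := by
    rintro ⟨s, hc, hb, hs⟩
    apply Subtype.ext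
    show s.filter (· ≠ 0) + Multiset.replicate (m - Multiset.card (s.filter (· ≠ 0))) 0 = s
    have h1 := Multiset.filter_add_not (· ≠ 0) s
    have h2 : s.filter (fun a => ¬ a ≠ 0) = Multiset.replicate
        (m - Multiset.card (s.filter (· ≠ 0))) 0 := by
      rw [Multiset.eq_replicate]
      constructor
      · have := congrArg Multiset.card h1
        rw [Multiset.card_add] at this
        omega
      · intro b hb'
        have := Multiset.of_mem_filter hb'
        simpa using this
    rw [← h2]; exact h1

lemma sum_map_sub (N : ℕ) (s : Multiset ℕ) (hb : ∀ x ∈ s, x ≤ N) :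
    (s.map (N - ·)).sum + s.sum = Multiset.card s * N := by
  induction s using Multiset.induction_on with
  | empty => simp
  | cons a s ih =>
    have ha : a ≤ N := hb a (Multiset.mem_cons_self a s)
    have ih' := ih fun x hx => hb x (Multiset.mem_cons_of_mem hx)
    rw [Multiset.map_cons, Multiset.sum_cons, Multiset.sum_cons, Multiset.card_cons,
      add_mul, one_mul]
    omega

/-- Complement in the `m × N` box. -/
lemma ms_compl (m N n : ℕ) (h : n ≤ m * N) :
    Nat.card (MS m N n) = Nat.card (MS m N (m * N - n)) := by
  apply Nat.card_congr
  have key : ∀ (u v : ℕ) (_ : u + v = m * N) (x : MS m N u),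
      Multiset.card (x.1.map (N - ·)) = m ∧ (∀ y ∈ x.1.map (N - ·), y ≤ N) ∧
        (x.1.map (N - ·)).sum = v := by
    rintro u v huv ⟨s, hc, hb, hs⟩
    refine ⟨by simp [hc], fun x hx => ?_, ?_⟩
    · rcases Multiset.mem_map.1 hx with ⟨y, _, rfl⟩; omega
    · have := sum_map_sub N s hb
      rw [hc, hs] at this
      simp only
      omega
  have h2 : n + (m * N - n) = m * N := by omega
  have h3 : (m * N - n) + n = m * N := by omega
  have inv : ∀ (u : ℕ) (x : MS m N u), (x.1.map (N - ·)).map (N - ·) = x.1 := by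
    rintro u ⟨s, hc, hb, hs⟩
    show (s.map (N - ·)).map (N - ·) = s
    rw [Multiset.map_map]
    calc s.map ((fun x => N - x) ∘ (fun x => N - x))
        = s.map id := Multiset.map_congr rfl (fun x hx => by have := hb x hx; simp; omega)
      _ = s := Multiset.map_id s
  exact ⟨fun x => ⟨x.1.map (N - ·), key n _ h2 x⟩, fun x => ⟨x.1.map (N - ·), key _ n h3 x⟩,
    fun x => Subtype.ext (inv n x), fun x => Subtype.ext (inv _ x)⟩

/-- If `n ≤ N` and `n ≤ N'`, the bound is irrelevant. -/
lemma ms_bound (m N N' n : ℕ) (h : n ≤ N) (h' : n ≤ N') :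
    Nat.card (MS m N n) = Nat.card (MS m N' n) := by
  apply Nat.card_congr
  have key : ∀ (M M' : ℕ) (_ : n ≤ M') (x : MS m M n),
      Multiset.card x.1 = m ∧ (∀ y ∈ x.1, y ≤ M') ∧ x.1.sum = n := by
    rintro M M' hM ⟨s, hc, hb, hs⟩
    refine ⟨hc, fun x hx => ?_, hs⟩
    calc x ≤ s.sum := Multiset.single_le_sum (fun _ _ => Nat.zero_le _) x hx
      _ = n := hs
      _ ≤ M' := hM
  exact ⟨fun x => ⟨x.1, key N N' h' x⟩, fun x => ⟨x.1, key N' N h x⟩,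
    fun x => Subtype.ext rfl, fun x => Subtype.ext rfl⟩

/-- Splitting off a largest part. -/
lemma ms_split (N n : ℕ) (h : N + 1 ≤ n) :
    Nat.card (MS 4 (N + 1) n) =
      Nat.card (MS 4 N n) + Nat.card (MS 3 (N + 1) (n - (N + 1))) := by
  classical
  have e0 : MS 4 (N + 1) n ≃
      {x : MS 4 (N + 1) n // (N + 1) ∈ x.1} ⊕ {x : MS 4 (N + 1) n // (N + 1) ∉ x.1} :=
    (Equiv.sumCompl _).symm
  have e1 : {x : MS 4 (N + 1) n // (N + 1) ∉ x.1} ≃ MS 4 N n := by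
    refine ⟨fun x => ⟨x.1.1, x.1.2.1, fun y hy => ?_, x.1.2.2.2⟩,
      fun s => ⟨⟨s.1, s.2.1, fun y hy => le_trans (s.2.2.1 y hy) (Nat.le_succ N), s.2.2.2⟩,
        fun hm => by have := s.2.2.1 _ hm; omega⟩,
      fun x => Subtype.ext (Subtype.ext rfl), fun s => Subtype.ext rfl⟩
    have h1 := x.1.2.2.1 y hy
    have h2 : y ≠ N + 1 := fun he => x.2 (he ▸ hy)
    omega
  have e2 : {x : MS 4 (N + 1) n // (N + 1) ∈ x.1} ≃ MS 3 (N + 1) (n - (N + 1)) := by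
    refine ⟨fun x => ⟨x.1.1.erase (N + 1), ?_,
        fun y hy => x.1.2.2.1 y (Multiset.mem_of_mem_erase hy), ?_⟩,
      fun t => ⟨⟨(N + 1) ::ₘ t.1, by rw [Multiset.card_cons, t.2.1],
        fun y hy => by rcases Multiset.mem_cons.1 hy with rfl | hy
                       · exact le_rfl
                       · exact t.2.2.1 y hy,
        by rw [Multiset.sum_cons, t.2.2.2]; omega⟩, Multiset.mem_cons_self _ _⟩,
      ?_, ?_⟩
    · rw [Multiset.card_erase_of_mem x.2, x.1.2.1]; rfl
    · have hk : (N + 1) + (x.1.1.erase (N + 1)).sum = x.1.1.sum := by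
        rw [← Multiset.sum_cons, Multiset.cons_erase x.2]
      have := x.1.2.2.2
      omega
    · rintro ⟨⟨s, hc, hb, hs⟩, hm⟩
      exact Subtype.ext (Subtype.ext (Multiset.cons_erase hm))
    · rintro ⟨t, hc, hb, hs⟩
      exact Subtype.ext (Multiset.erase_cons_head _ _)
  rw [Nat.card_congr e0, Nat.card_sum, Nat.card_congr e1, Nat.card_congr e2, add_comm]

lemma main_ind : ∀ N : ℕ, 1 ≤ N →
    Nat.card (MS 4 N (2 * N - 1)) = Nat.card (MS 4 N (2 * N - 2)) ∧
    Nat.card (MS 4 N (2 * N)) + Nat.card (MS 3 (N - 1) (N - 1)) =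
      Nat.card (MS 4 N (2 * N - 2)) + Nat.card (MS 3 N N) := by
  intro N hN
  induction N, hN using Nat.le_induction with
  | base =>
    constructor
    · rw [show (2 * 1 - 1 : ℕ) = 1 from rfl, show (2 * 1 - 2 : ℕ) = 0 from rfl,
        msCard, msCard]
      decide
    · rw [show (2 * 1 : ℕ) = 2 from rfl, show (2 * 1 - 2 : ℕ) = 0 from rfl,
        msCard, msCard, msCard, msCard]
      decide
  | succ N hN ih =>
    obtain ⟨ih1, ih2⟩ := ih
    have hsplit1 := ms_split N (2 * N + 1) (by omega)
    rw [show 2 * N + 1 - (N + 1) = N from by omega] at hsplit1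
    have hcompl1 := ms_compl 4 N (2 * N + 1) (by omega)
    rw [show 4 * N - (2 * N + 1) = 2 * N - 1 from by omega] at hcompl1
    have hb1 := ms_bound 3 (N + 1) N N (by omega) le_rfl
    have hsplit2 := ms_split N (2 * N) (by omega)
    rw [show 2 * N - (N + 1) = N - 1 from by omega] at hsplit2
    have hb2 := ms_bound 3 (N + 1) (N - 1) (N - 1) (by omega) le_rfl
    have hsplit3 := ms_split N (2 * N + 2) (by omega)
    rw [show 2 * N + 2 - (N + 1) = N + 1 from by omega] at hsplit3
    have hcompl3 := ms_compl 4 N (2 * N + 2) (by omega)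
    rw [show 4 * N - (2 * N + 2) = 2 * N - 2 from by omega] at hcompl3
    rw [show 2 * (N + 1) - 1 = 2 * N + 1 from by omega,
      show 2 * (N + 1) - 2 = 2 * N from by omega,
      show 2 * (N + 1) = 2 * N + 2 from by omega,
      show N + 1 - 1 = N from by omega]
    omega

lemma pBdd_eq_s16 (m N : ℕ) (n : ℤ) (h : 0 ≤ n) :
    pBdd n m N = Nat.card (MS m N n.toNat) := by
  rw [pBdd, if_pos h]
  exact Nat.card_congr (partEquiv m N n.toNat)

theorem stmt16 (N : ℕ) (hN : 1 ≤ N) :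
    pBdd (2 * (N : ℤ) - 1) 4 N = pBdd (2 * (N : ℤ) - 2) 4 N := by
  have h1 : (0 : ℤ) ≤ 2 * (N : ℤ) - 1 := by omega
  have h2 : (0 : ℤ) ≤ 2 * (N : ℤ) - 2 := by omega
  rw [pBdd_eq_s16 4 N _ h1, pBdd_eq_s16 4 N _ h2,
    show (2 * (N : ℤ) - 1).toNat = 2 * N - 1 from by omega,
    show (2 * (N : ℤ) - 2).toNat = 2 * N - 2 from by omega]
  exact (main_ind N hN).1
end
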